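/- arXiv:0811.3003 — 7 statements merged into one kernel-verified Lean document; each statement's English description precedes it below -/
import Mathlib

section
/- If f̃ : ℝ×[0,1] → ℝ×[0,1] is a homeomorphism of the infinite strip commuting with the translation T(x,y)=(x+1,y), and f̃ has a dense orbit (is transitive), then for every real number a and every integer i, the image f̃^i({a}×[0,1]) intersects {a}×[0,1]. -/
open Set

abbrev Strip := ℝ × (Set.Icc (0:ℝ) 1)

/-- Horizontal translation by 1 on the strip. -/
def T (p : Strip) : Strip := (p.1 + 1, p.2)

/-- Vertical fiber over `a`. -/
def V (a : ℝ) : Set Strip := {p : Strip | p.1 = a}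

namespace StripAux

noncomputable def y0 : Set.Icc (0:ℝ) 1 := ⟨0, by norm_num⟩

lemma set_lt_eq (a : ℝ) : {p : Strip | p.1 < a} = (Iio a) ×ˢ (univ : Set (Set.Icc (0:ℝ) 1)) := by
  ext ⟨x, y⟩; simp

lemma set_gt_eq (a : ℝ) : {p : Strip | a < p.1} = (Ioi a) ×ˢ (univ : Set (Set.Icc (0:ℝ) 1)) := by
  ext ⟨x, y⟩; simp

lemma V_eq (a : ℝ) : V a = ({a} : Set ℝ) ×ˢ (univ : Set (Set.Icc (0:ℝ) 1)) := by
  ext ⟨x, y⟩; simp [V, eq_comm]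

lemma isOpen_ltset (a : ℝ) : IsOpen {p : Strip | p.1 < a} :=
  isOpen_lt continuous_fst continuous_const

lemma isOpen_gtset (a : ℝ) : IsOpen {p : Strip | a < p.1} :=
  isOpen_lt continuous_const continuous_fst

lemma preconn_lt (a : ℝ) : IsPreconnected {p : Strip | p.1 < a} := by
  rw [set_lt_eq]
  exact (isConnected_Iio.prod isConnected_univ).isPreconnected

lemma preconn_gt (a : ℝ) : IsPreconnected {p : Strip | a < p.1} := by
  rw [set_gt_eq]
  exact (isConnected_Ioi.prod isConnected_univ).isPreconnected

lemma preconn_V (a : ℝ) : IsPreconnected (V a) := by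
  rw [V_eq]
  exact (isConnected_singleton.prod isConnected_univ).isPreconnected

lemma closure_ltset (a : ℝ) : closure {p : Strip | p.1 < a} = {p : Strip | p.1 ≤ a} := by
  rw [set_lt_eq, closure_prod_eq, closure_Iio, closure_univ]
  ext ⟨x, y⟩; simp

lemma closure_gtset (a : ℝ) : closure {p : Strip | a < p.1} = {p : Strip | a ≤ p.1} := by
  rw [set_gt_eq, closure_prod_eq, closure_Ioi, closure_univ]
  ext ⟨x, y⟩; simp

/-- Bounded displacement for continuous T-equivariant maps. -/
lemma displacement (g : Strip → Strip) (hg : Continuous g)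
    (hc : ∀ p, g (T p) = T (g p)) :
    ∃ C : ℝ, 0 ≤ C ∧ ∀ p, |(g p).1 - p.1| ≤ C := by
  set h : Strip → ℝ := fun p => (g p).1 - p.1 with hh
  have hhc : Continuous h := (continuous_fst.comp hg).sub continuous_fst
  have hstep : ∀ p : Strip, h (T p) = h p := by
    intro p
    show (g (T p)).1 - (T p).1 = (g p).1 - p.1
    rw [hc p]
    show (g p).1 + 1 - (p.1 + 1) = (g p).1 - p.1
    ring
  have hint : ∀ (n : ℤ) (p : Strip), h ((p.1 + n, p.2) : Strip) = h p := by
    intro n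
    induction n using Int.induction_on with
    | zero => intro p; norm_num
    | succ k ih =>
        intro p
        have h1 := ih p
        push_cast at h1 ⊢
        have e1 : ((p.1 + ((k:ℝ) + 1), p.2) : Strip) = T ((p.1 + (k:ℝ), p.2) : Strip) := by
          simp [T]; ring
        rw [e1, hstep]
        exact h1
    | pred k ih =>
        intro p
        have h1 := ih p
        push_cast at h1 ⊢
        have e1 : ((p.1 + -(k:ℝ), p.2) : Strip) = T ((p.1 + (-(k:ℝ) - 1), p.2) : Strip) := by
          simp [T]; ring
        rw [e1, hstep] at h1
        exact h1
  have hK : IsCompact ((Icc (0:ℝ) 1) ×ˢ (univ : Set (Set.Icc (0:ℝ) 1))) :=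
    isCompact_Icc.prod isCompact_univ
  obtain ⟨C, hC⟩ := hK.exists_bound_of_continuousOn hhc.continuousOn
  refine ⟨max C 0, le_max_right _ _, fun p => ?_⟩
  have hq : ((Int.fract p.1, p.2) : Strip) ∈ (Icc (0:ℝ) 1) ×ˢ (univ : Set (Set.Icc (0:ℝ) 1)) := by
    refine ⟨⟨Int.fract_nonneg p.1, (Int.fract_lt_one p.1).le⟩, trivial⟩
  have hEq : h p = h ((Int.fract p.1, p.2) : Strip) := by
    have h2 := hint ⌊p.1⌋ ((Int.fract p.1, p.2) : Strip)
    have h3 : ((Int.fract p.1 + ⌊p.1⌋, p.2) : Strip) = p := by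
      have : Int.fract p.1 + ⌊p.1⌋ = p.1 := by
        rw [Int.fract]; ring
      rw [this]
    rw [h3] at h2
    exact h2
  calc |(g p).1 - p.1| = |h ((Int.fract p.1, p.2) : Strip)| := by rw [← hEq]
    _ ≤ C := by simpa using hC _ hq
    _ ≤ max C 0 := le_max_left _ _



/-- If a T-equivariant homeomorphism moves `V a` off itself, it pushes a half
strip strictly to one side. -/
lemma sides (g : Strip ≃ₜ Strip) (hgc : ∀ p, g (T p) = T (g p))
    (a : ℝ) (hdisj : ∀ p ∈ V a, g p ∉ V a) :
    (∀ p : Strip, a ≤ p.1 → a < (g p).1) ∨ (∀ p : Strip, p.1 ≤ a → (g p).1 < a) := by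
  obtain ⟨C, hC0, hC⟩ := displacement g g.continuous hgc
  have hcover : ⇑g '' V a ⊆ {p : Strip | p.1 < a} ∪ {p : Strip | a < p.1} := by
    rintro q ⟨p, hp, rfl⟩
    have : (g p).1 ≠ a := fun h => hdisj p hp h
    rcases lt_or_gt_of_ne this with h | h
    · exact Or.inl h
    · exact Or.inr h
  have hpre : IsPreconnected (⇑g '' V a) := (preconn_V a).image _ g.continuous.continuousOn
  have hdisjLR : Disjoint {p : Strip | p.1 < a} {p : Strip | a < p.1} := by
    rw [Set.disjoint_left]
    intro q h1 h2
    simp only [Set.mem_setOf_eq] at h1 h2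
    linarith
  rcases (⇑g '' V a).eq_empty_or_nonempty.symm.imp id id with hne | hne
  case inr => exact absurd (Set.image_eq_empty.1 hne) (Set.nonempty_iff_ne_empty.1 ⟨(a, y0), rfl⟩)
  -- decide side
  by_cases hside : (⇑g '' V a ∩ {p : Strip | a < p.1}).Nonempty
  · -- image of fiber is on the right
    have hR : ⇑g '' V a ⊆ {p : Strip | a < p.1} :=
      hpre.subset_left_of_subset_union (isOpen_gtset a) (isOpen_ltset a) hdisjLR.symm
        (by intro q hq; exact (hcover hq).symm) hside
    left
    -- W := left open half strip
    set W : Set Strip := {p : Strip | p.1 < a} with hW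
    have hWsub : W ⊆ ⇑g '' W := by
      have hcov2 : W ⊆ ⇑g '' W ∪ ⇑g '' {p : Strip | a < p.1} := by
        intro p hp
        obtain ⟨q, rfl⟩ : ∃ q, g q = p := ⟨g.symm p, g.apply_symm_apply p⟩
        have hq : q.1 ≠ a := by
          intro h
          have h5 := hR (Set.mem_image_of_mem (⇑g) (show q ∈ V a from h))
          rw [hW] at hp
          simp only [Set.mem_setOf_eq] at h5 hp
          linarith
        rcases lt_or_gt_of_ne hq with h | h
        · exact Or.inl (Set.mem_image_of_mem _ h)
        · exact Or.inr (Set.mem_image_of_mem _ h)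
      have hdisj2 : Disjoint (⇑g '' W) (⇑g '' {p : Strip | a < p.1}) := by
        rw [Set.disjoint_left]
        rintro q ⟨w, hw, rfl⟩ ⟨r, hr, hrw⟩
        have : r = w := g.injective hrw
        subst this
        rw [hW] at hw
        simp only [Set.mem_setOf_eq] at hr hw
        linarith
      have hmeet : (W ∩ ⇑g '' W).Nonempty := by
        refine ⟨g ((a - C - 1, y0) : Strip), ?_, Set.mem_image_of_mem _ ?_⟩
        · have := hC ((a - C - 1, y0) : Strip)
          have habs := abs_le.1 this
          show (g ((a - C - 1, y0) : Strip)).1 < a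
          have : ((a - C - 1, y0) : Strip).1 = a - C - 1 := rfl
          rw [this] at habs
          linarith [habs.2]
        · show (a : ℝ) - C - 1 < a
          linarith
      exact (preconn_lt a).subset_left_of_subset_union
        (g.isOpen_image.2 (isOpen_ltset a)) (g.isOpen_image.2 (isOpen_gtset a))
        hdisj2 hcov2 hmeet
    have hVsub : V a ⊆ ⇑g '' W := by
      intro p hp
      have h1 : p ∈ closure W := by
        rw [hW, closure_ltset]
        exact le_of_eq hp
      have h2 : closure W ⊆ ⇑g '' closure W := by
        calc closure W ⊆ closure (⇑g '' W) := closure_mono hWsub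
          _ = ⇑g '' closure W := (g.image_closure W).symm
      have h3 : p ∈ ⇑g '' closure W := h2 h1
      obtain ⟨q, hq, rfl⟩ := h3
      rw [hW, closure_ltset] at hq
      simp only [Set.mem_setOf_eq] at hq
      rcases lt_or_eq_of_le hq with h | h
      · exact Set.mem_image_of_mem _ h
      · exact absurd hp (hdisj q h)
    intro p hpa
    by_contra hle
    push_neg at hle
    have hgp : g p ∈ ⇑g '' W := by
      rcases lt_or_eq_of_le hle with h | h
      · exact hWsub h
      · exact hVsub h
    obtain ⟨q, hq, hqe⟩ := hgp
    have : q = p := g.injective hqe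
    subst this
    exact absurd hpa (not_le.2 hq)
  · -- image of fiber is on the left
    have hL : ⇑g '' V a ⊆ {p : Strip | p.1 < a} := by
      intro q hq
      rcases hcover hq with h | h
      · exact h
      · exact absurd (⟨q, hq, h⟩ : (⇑g '' V a ∩ {p : Strip | a < p.1}).Nonempty) hside
    right
    set W : Set Strip := {p : Strip | a < p.1} with hW
    have hWsub : W ⊆ ⇑g '' W := by
      have hcov2 : W ⊆ ⇑g '' W ∪ ⇑g '' {p : Strip | p.1 < a} := by
        intro p hp
        obtain ⟨q, rfl⟩ : ∃ q, g q = p := ⟨g.symm p, g.apply_symm_apply p⟩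
        have hq : q.1 ≠ a := by
          intro h
          have h5 := hL (Set.mem_image_of_mem (⇑g) (show q ∈ V a from h))
          rw [hW] at hp
          simp only [Set.mem_setOf_eq] at h5 hp
          linarith
        rcases lt_or_gt_of_ne hq with h | h
        · exact Or.inr (Set.mem_image_of_mem _ h)
        · exact Or.inl (Set.mem_image_of_mem _ h)
      have hdisj2 : Disjoint (⇑g '' W) (⇑g '' {p : Strip | p.1 < a}) := by
        rw [Set.disjoint_left]
        rintro q ⟨w, hw, rfl⟩ ⟨r, hr, hrw⟩
        have : r = w := g.injective hrw
        subst this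
        rw [hW] at hw
        simp only [Set.mem_setOf_eq] at hr hw
        linarith
      have hmeet : (W ∩ ⇑g '' W).Nonempty := by
        refine ⟨g ((a + C + 1, y0) : Strip), ?_, Set.mem_image_of_mem _ ?_⟩
        · have := hC ((a + C + 1, y0) : Strip)
          have habs := abs_le.1 this
          show a < (g ((a + C + 1, y0) : Strip)).1
          have : ((a + C + 1, y0) : Strip).1 = a + C + 1 := rfl
          rw [this] at habs
          linarith [habs.1]
        · show (a : ℝ) < a + C + 1
          linarith
      exact (preconn_gt a).subset_left_of_subset_union
        (g.isOpen_image.2 (isOpen_gtset a)) (g.isOpen_image.2 (isOpen_ltset a))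
        hdisj2 hcov2 hmeet
    have hVsub : V a ⊆ ⇑g '' W := by
      intro p hp
      have h1 : p ∈ closure W := by
        rw [hW, closure_gtset]
        exact ge_of_eq hp
      have h2 : closure W ⊆ ⇑g '' closure W := by
        calc closure W ⊆ closure (⇑g '' W) := closure_mono hWsub
          _ = ⇑g '' closure W := (g.image_closure W).symm
      obtain ⟨q, hq, rfl⟩ := h2 h1
      rw [hW, closure_gtset] at hq
      simp only [Set.mem_setOf_eq] at hq
      rcases lt_or_eq_of_le hq with h | h
      · exact Set.mem_image_of_mem _ h
      · exact absurd hp (hdisj q h.symm)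
    intro p hpa
    by_contra hle
    push_neg at hle
    have hgp : g p ∈ ⇑g '' W := by
      rcases lt_or_eq_of_le hle with h | h
      · exact hWsub h
      · exact hVsub h.symm
    obtain ⟨q, hq, hqe⟩ := hgp
    have : q = p := g.injective hqe
    subst this
    exact absurd hpa (not_le.2 hq)

lemma iter_disp (f : Strip ≃ₜ Strip) (hcomm : ∀ p, f (T p) = T (f p)) :
    ∃ C : ℝ, 0 ≤ C ∧ ∀ (r : ℕ) (p : Strip), |((⇑f)^[r] p).1 - p.1| ≤ C * r := by
  obtain ⟨C, hC0, hC⟩ := displacement f f.continuous hcomm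
  refine ⟨C, hC0, fun r => ?_⟩
  induction r with
  | zero => intro p; simp
  | succ r ih =>
      intro p
      rw [Function.iterate_succ_apply']
      have h1 := hC ((⇑f)^[r] p)
      have h2 := ih p
      have h3 := abs_sub_le ((f ((⇑f)^[r] p)).1) (((⇑f)^[r] p).1) p.1
      push_cast
      linarith

lemma no_trap_right (f : Strip ≃ₜ Strip) (hcomm : ∀ p, f (T p) = T (f p))
    (z : Strip) (hz : Dense (Set.range fun n : ℕ => (⇑f)^[n] z))
    (a : ℝ) (j : ℕ) (hj : 1 ≤ j)
    (hinv : ∀ p : Strip, a < p.1 → a < ((⇑f)^[j] p).1) : False := by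
  obtain ⟨C, hC0, hC⟩ := iter_disp f hcomm
  obtain ⟨w, ⟨n₀, rfl⟩, hw⟩ := hz.exists_mem_open (isOpen_gtset a)
    ⟨((a+1, y0) : Strip), show a < a + 1 by linarith⟩
  have hw' : a < ((⇑f)^[n₀] z).1 := hw
  have hk : ∀ k : ℕ, a < ((⇑f)^[n₀ + k * j] z).1 := by
    intro k
    induction k with
    | zero => simpa using hw'
    | succ k ih =>
        have e : n₀ + (k+1)*j = j + (n₀ + k*j) := by ring
        rw [e, Function.iterate_add_apply]
        exact hinv _ ih
  have hall : ∀ m : ℕ, n₀ ≤ m → a - C * j ≤ ((⇑f)^[m] z).1 := by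
    intro m hm
    obtain ⟨d, rfl⟩ := Nat.exists_eq_add_of_le hm
    have e : n₀ + d = (d % j) + (n₀ + (d / j) * j) := by
      conv_lhs => rw [← Nat.mod_add_div' d j]
      ring
    rw [e, Function.iterate_add_apply]
    have h1 := hC (d % j) ((⇑f)^[n₀ + d / j * j] z)
    have h2 := hk (d / j)
    have h3 : ((d % j : ℕ) : ℝ) ≤ (j : ℝ) := by
      exact_mod_cast (Nat.mod_lt d hj).le
    have h4 : C * ((d % j : ℕ) : ℝ) ≤ C * j := mul_le_mul_of_nonneg_left h3 hC0
    have h5 := (abs_le.1 h1).1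
    linarith
  have hne : (Finset.range (n₀+1)).Nonempty := ⟨0, Finset.mem_range.2 (Nat.succ_pos _)⟩
  set B := (Finset.range (n₀+1)).inf' hne (fun m => ((⇑f)^[m] z).1) with hB
  set b := min (a - C * j) B - 1 with hb
  obtain ⟨w, ⟨m, rfl⟩, hwm⟩ := hz.exists_mem_open (isOpen_ltset b)
    ⟨((b-1, y0) : Strip), show b - 1 < b by linarith⟩
  have hwm' : ((⇑f)^[m] z).1 < b := hwm
  rcases le_or_gt m n₀ with h | h
  · have h6 : B ≤ ((⇑f)^[m] z).1 :=
      Finset.inf'_le _ (Finset.mem_range.2 (Nat.lt_succ_of_le h))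
    have h7 : min (a - C*j) B ≤ B := min_le_right _ _
    linarith
  · have h6 := hall m h.le
    have h7 : min (a - C*j) B ≤ a - C*j := min_le_left _ _
    linarith

lemma no_trap_left (f : Strip ≃ₜ Strip) (hcomm : ∀ p, f (T p) = T (f p))
    (z : Strip) (hz : Dense (Set.range fun n : ℕ => (⇑f)^[n] z))
    (a : ℝ) (j : ℕ) (hj : 1 ≤ j)
    (hinv : ∀ p : Strip, p.1 < a → ((⇑f)^[j] p).1 < a) : False := by
  obtain ⟨C, hC0, hC⟩ := iter_disp f hcomm
  obtain ⟨w, ⟨n₀, rfl⟩, hw⟩ := hz.exists_mem_open (isOpen_ltset a)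
    ⟨((a-1, y0) : Strip), show a - 1 < a by linarith⟩
  have hw' : ((⇑f)^[n₀] z).1 < a := hw
  have hk : ∀ k : ℕ, ((⇑f)^[n₀ + k * j] z).1 < a := by
    intro k
    induction k with
    | zero => simpa using hw'
    | succ k ih =>
        have e : n₀ + (k+1)*j = j + (n₀ + k*j) := by ring
        rw [e, Function.iterate_add_apply]
        exact hinv _ ih
  have hall : ∀ m : ℕ, n₀ ≤ m → ((⇑f)^[m] z).1 ≤ a + C * j := by
    intro m hm
    obtain ⟨d, rfl⟩ := Nat.exists_eq_add_of_le hm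
    have e : n₀ + d = (d % j) + (n₀ + (d / j) * j) := by
      conv_lhs => rw [← Nat.mod_add_div' d j]
      ring
    rw [e, Function.iterate_add_apply]
    have h1 := hC (d % j) ((⇑f)^[n₀ + d / j * j] z)
    have h2 := hk (d / j)
    have h3 : ((d % j : ℕ) : ℝ) ≤ (j : ℝ) := by
      exact_mod_cast (Nat.mod_lt d hj).le
    have h4 : C * ((d % j : ℕ) : ℝ) ≤ C * j := mul_le_mul_of_nonneg_left h3 hC0
    have h5 := (abs_le.1 h1).2
    linarith
  have hne : (Finset.range (n₀+1)).Nonempty := ⟨0, Finset.mem_range.2 (Nat.succ_pos _)⟩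
  set B := (Finset.range (n₀+1)).sup' hne (fun m => ((⇑f)^[m] z).1) with hB
  set b := max (a + C * j) B + 1 with hb
  obtain ⟨w, ⟨m, rfl⟩, hwm⟩ := hz.exists_mem_open (isOpen_gtset b)
    ⟨((b+1, y0) : Strip), show b < b + 1 by linarith⟩
  have hwm' : b < ((⇑f)^[m] z).1 := hwm
  rcases le_or_gt m n₀ with h | h
  · have h6 : ((⇑f)^[m] z).1 ≤ B := by
      rw [hB]
      exact Finset.le_sup' (fun m => ((⇑f)^[m] z).1) (Finset.mem_range.2 (Nat.lt_succ_of_le h))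
    have h7 : B ≤ max (a + C*j) B := le_max_right _ _
    linarith
  · have h6 := hall m h.le
    have h7 : a + C*j ≤ max (a + C*j) B := le_max_left _ _
    linarith

def hpow (f : Strip ≃ₜ Strip) : ℕ → Strip ≃ₜ Strip
  | 0 => Homeomorph.refl _
  | n+1 => (hpow f n).trans f

lemma hpow_coe (f : Strip ≃ₜ Strip) : ∀ n, ⇑(hpow f n) = (⇑f)^[n]
  | 0 => rfl
  | n+1 => by
      funext p
      show f ((hpow f n) p) = (⇑f)^[n+1] p
      rw [hpow_coe f n, Function.iterate_succ_apply']

lemma hpow_symm_coe (f : Strip ≃ₜ Strip) : ∀ n, ⇑(hpow f n).symm = (⇑f.symm)^[n]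
  | 0 => rfl
  | n+1 => by
      funext p
      show (hpow f n).symm (f.symm p) = (⇑f.symm)^[n+1] p
      rw [hpow_symm_coe f n, Function.iterate_succ_apply]

lemma hpow_toEquiv (f : Strip ≃ₜ Strip) : ∀ n, (hpow f n).toEquiv = f.toEquiv ^ n
  | 0 => rfl
  | n+1 => by
      show ((hpow f n).trans f).toEquiv = f.toEquiv ^ (n+1)
      rw [pow_succ', ← hpow_toEquiv f n]
      rfl

lemma symm_comm (f : Strip ≃ₜ Strip) (hcomm : ∀ p, f (T p) = T (f p)) :
    ∀ p, f.symm (T p) = T (f.symm p) := by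
  intro p
  have h1 : T p = f (T (f.symm p)) := by
    rw [hcomm (f.symm p), f.apply_symm_apply]
  rw [h1, f.symm_apply_apply]

lemma iter_comm (g : Strip → Strip) (hc : ∀ p, g (T p) = T (g p)) :
    ∀ n p, g^[n] (T p) = T (g^[n] p) := by
  intro n
  induction n with
  | zero => intro p; simp
  | succ n ih =>
      intro p
      simp only [Function.iterate_succ_apply']
      rw [ih, hc]

end StripAux

open StripAux in
theorem stmt0 (f : Strip ≃ₜ Strip)
    (hcomm : ∀ p, f (T p) = T (f p))
    (htrans : ∃ z : Strip, Dense (Set.range fun n : ℕ => (⇑f)^[n] z)) :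
    ∀ (a : ℝ) (i : ℤ), ((⇑(f.toEquiv ^ i) '' V a) ∩ V a).Nonempty := by
  obtain ⟨z, hz⟩ := htrans
  intro a i
  by_contra hcon
  rw [Set.not_nonempty_iff_eq_empty] at hcon
  have hdisj : ∀ p ∈ V a, (⇑(f.toEquiv ^ i)) p ∉ V a := by
    intro p hp hq
    exact Set.eq_empty_iff_forall_notMem.1 hcon _ ⟨Set.mem_image_of_mem _ hp, hq⟩
  have hsymm := symm_comm f hcomm
  cases i with
  | ofNat j =>
      rcases Nat.eq_zero_or_pos j with rfl | hj
      · refine hdisj ((a, y0) : Strip) rfl ?_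
        have h0 : f.toEquiv ^ (Int.ofNat 0) = 1 := by
          rw [show (Int.ofNat 0) = (0:ℤ) from rfl, zpow_zero]
        rw [h0]
        exact rfl
      · have hcoe : ⇑(f.toEquiv ^ (Int.ofNat j)) = ⇑(hpow f j) := by
          rw [show (Int.ofNat j) = (j:ℤ) from rfl, zpow_natCast, ← hpow_toEquiv]
          rfl
        have hGc : ∀ p, (hpow f j) (T p) = T ((hpow f j) p) := by
          intro p
          show ⇑(hpow f j) (T p) = T (⇑(hpow f j) p)
          rw [hpow_coe]
          exact iter_comm (⇑f) hcomm j p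
        have hdisjG : ∀ p ∈ V a, (hpow f j) p ∉ V a := by
          intro p hp
          have := hdisj p hp
          rwa [hcoe] at this
        rcases sides (hpow f j) hGc a hdisjG with hri | hle
        · refine no_trap_right f hcomm z hz a j hj ?_
          intro p hp
          have h1 := hri p hp.le
          rwa [show ⇑(hpow f j) = (⇑f)^[j] from hpow_coe f j] at h1
        · refine no_trap_left f hcomm z hz a j hj ?_
          intro p hp
          have h1 := hle p hp.le
          rwa [show ⇑(hpow f j) = (⇑f)^[j] from hpow_coe f j] at h1
  | negSucc k =>
      set j := k + 1 with hj
      have hj1 : 1 ≤ j := Nat.succ_le_succ (Nat.zero_le _)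
      have hcoe : ⇑(f.toEquiv ^ (Int.negSucc k)) = ⇑((hpow f j).symm) := by
        rw [zpow_negSucc, ← hpow_toEquiv f (k+1)]
        rfl
      have hGc : ∀ p, (hpow f j).symm (T p) = T ((hpow f j).symm p) := by
        intro p
        show ⇑(hpow f j).symm (T p) = T (⇑(hpow f j).symm p)
        rw [hpow_symm_coe]
        exact iter_comm (⇑f.symm) hsymm j p
      have hdisjG : ∀ p ∈ V a, (hpow f j).symm p ∉ V a := by
        intro p hp
        have := hdisj p hp
        rwa [hcoe] at this
      have hGinv : ∀ p : Strip, (hpow f j).symm ((⇑f)^[j] p) = p := by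
        intro p
        rw [← hpow_coe f j]
        exact (hpow f j).symm_apply_apply p
      rcases sides ((hpow f j).symm) hGc a hdisjG with hri | hle
      · refine no_trap_left f hcomm z hz a j hj1 ?_
        intro p hp
        by_contra hge
        push_neg at hge
        have h1 := hri _ hge
        rw [hGinv p] at h1
        linarith
      · refine no_trap_right f hcomm z hz a j hj1 ?_
        intro p hp
        by_contra hge
        push_neg at hge
        have h1 := hle _ hge
        rw [hGinv p] at h1
        linarith
end

section
/- If f̃ is a transitive homeomorphism of the strip à = ℝ×[0,1] commuting with the unit horizontal translation, then there is no nonempty open connected set W ⊂ Ã that is bounded to the right (i.e., contained in (-∞,M]×[0,1] for some M) and satisfies f̃(W) ⊆ W. -/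
open Set

theorem stmt1 (f : Strip ≃ₜ Strip)
    (hcomm : ∀ p, f (T p) = T (f p))
    (htrans : ∃ z : Strip, Dense (Set.range fun n : ℕ => (⇑f)^[n] z)) :
    ¬ ∃ W : Set Strip, W.Nonempty ∧ IsOpen W ∧ IsConnected W ∧
      (∃ M : ℝ, ∀ p ∈ W, p.1 ≤ M) ∧ ⇑f '' W ⊆ W := by
  rintro ⟨W, hWne, hWopen, -, ⟨M, hM⟩, hf⟩
  obtain ⟨z, hz⟩ := htrans
  -- forward invariance of W under iterates
  have hiter : ∀ (k : ℕ) (w : Strip), w ∈ W → (⇑f)^[k] w ∈ W := by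
    intro k
    induction k with
    | zero => intro w hw; simpa using hw
    | succ k ih =>
      intro w hw
      rw [Function.iterate_succ_apply']
      exact hf ⟨_, ih w hw, rfl⟩
  -- the orbit meets W
  obtain ⟨x, ⟨n, hn⟩, hxW⟩ := hz.exists_mem_open hWopen hWne
  -- bound the first n orbit points
  have hfin : (Set.Finite ((fun j => ((⇑f)^[j] z).1) '' (Set.Iio n))) :=
    (Set.finite_Iio n).image _
  obtain ⟨C, hC⟩ := hfin.bddAbove
  set M' := max M C with hM'
  -- the open set to the right of M'
  have hUopen : IsOpen {p : Strip | M' < p.1} :=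
    isOpen_lt continuous_const continuous_fst
  have hUne : Set.Nonempty {p : Strip | M' < p.1} :=
    ⟨(M' + 1, ⟨0, by norm_num⟩), by simp⟩
  obtain ⟨y, ⟨m, hm⟩, hyU⟩ := hz.exists_mem_open hUopen hUne
  simp only [Set.mem_setOf_eq] at hyU
  rw [← hm] at hyU
  -- m must be ≥ n
  have hmn : n ≤ m := by
    by_contra h
    push_neg at h
    have : ((⇑f)^[m] z).1 ≤ C := hC ⟨m, h, rfl⟩
    have : ((⇑f)^[m] z).1 ≤ M' := this.trans (le_max_right _ _)
    linarith
  -- then f^[m] z ∈ W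
  have hWmem : (⇑f)^[m] z ∈ W := by
    have : (⇑f)^[m - n + n] z ∈ W := by
      rw [Function.iterate_add_apply]
      exact hiter _ _ (by simpa [← hn] using hxW)
    rwa [Nat.sub_add_cancel hmn] at this
  have := hM _ hWmem
  have : ((⇑f)^[m] z).1 ≤ M' := this.trans (le_max_left _ _)
  linarith
end

section
/- Let f̃ be a transitive homeomorphism of the strip à = ℝ×[0,1] commuting with the unit horizontal translation, and let E_lift ⊂ à be an open connected set with E_lift ∩ (E_lift + (i,0)) = ∅ for all nonzero integers i. Suppose there exist N > 0 and an integer i₀ ≥ 0 such that f̃^{-N}(E_lift) ⊆ E_lift + (i₀,0) and f̃^{-i}(E_lift) ∩ (E_lift + (j,0)) = ∅ for all integers j whenever 0 < i < N. Then f̃ is not transitive (contradiction); i.e., no such configuration exists for a transitive f̃. -/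
open Set

/-- Horizontal translation by an integer `k`. -/
def TrZ (k : ℤ) (p : Strip) : Strip := (p.1 + k, p.2)

lemma TrZ_zero (p : Strip) : TrZ 0 p = p := by
  simp [TrZ]

lemma TrZ_add (j k : ℤ) (p : Strip) : TrZ j (TrZ k p) = TrZ (j + k) p := by
  simp only [TrZ]
  refine Prod.ext ?_ rfl
  push_cast
  ring

lemma TrZ_continuous (k : ℤ) : Continuous (TrZ k) := by
  unfold TrZ
  fun_prop

lemma mem_TrZ_image {E : Set Strip} {k : ℤ} {x : Strip} :
    x ∈ TrZ k '' E ↔ TrZ (-k) x ∈ E := by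
  constructor
  · rintro ⟨y, hy, rfl⟩
    rw [TrZ_add]
    have e : -k + k = 0 := by ring
    rwa [e, TrZ_zero]
  · intro h
    refine ⟨TrZ (-k) x, h, ?_⟩
    rw [TrZ_add]
    have e : k + -k = 0 := by ring
    rw [e, TrZ_zero]

lemma isOpen_TrZ_image {E : Set Strip} (hE : IsOpen E) (k : ℤ) :
    IsOpen (TrZ k '' E) := by
  have : TrZ k '' E = TrZ (-k) ⁻¹' E := by
    ext x
    rw [mem_TrZ_image, mem_preimage]
  rw [this]
  exact hE.preimage (TrZ_continuous _)

lemma f_TrZ (f : Strip ≃ₜ Strip) (hcomm : ∀ p, f (T p) = T (f p)) :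
    ∀ (k : ℤ) (p : Strip), f (TrZ k p) = TrZ k (f p) := by
  have hT : ∀ p : Strip, T p = TrZ 1 p := fun p => by simp [T, TrZ]
  intro k
  induction k using Int.induction_on with
  | zero => intro p; rw [TrZ_zero, TrZ_zero]
  | succ n ih =>
      intro p
      have h1 : TrZ ((n : ℤ) + 1) p = T (TrZ n p) := by
        rw [hT, TrZ_add, add_comm]
      have h2 : TrZ ((n : ℤ) + 1) (f p) = T (TrZ n (f p)) := by
        rw [hT, TrZ_add, add_comm]
      rw [h1, h2, hcomm, ih]
  | pred n ih =>
      intro p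
      have h1 : TrZ (-(n : ℤ)) p = T (TrZ (-(n : ℤ) - 1) p) := by
        rw [hT, TrZ_add]
        congr 1
        ring
      have key : T (f (TrZ (-(n : ℤ) - 1) p)) = T (TrZ (-(n : ℤ) - 1) (f p)) := by
        rw [← hcomm, ← h1, ih]
        rw [hT, TrZ_add]
        congr 1
        ring
      have hTinj : ∀ a b : Strip, T a = T b → a = b := by
        intro a b hab
        have h1 := congrArg Prod.fst hab
        have h2 := congrArg Prod.snd hab
        simp only [T] at h1 h2
        have : a.1 = b.1 := by linarith
        exact Prod.ext this h2
      exact hTinj _ _ key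

lemma fsymm_TrZ (f : Strip ≃ₜ Strip) (hcomm : ∀ p, f (T p) = T (f p))
    (k : ℤ) (p : Strip) : f.symm (TrZ k p) = TrZ k (f.symm p) := by
  apply f.injective
  rw [f.apply_symm_apply, f_TrZ f hcomm, f.apply_symm_apply]

lemma fsymm_iter_TrZ (f : Strip ≃ₜ Strip) (hcomm : ∀ p, f (T p) = T (f p))
    (i : ℕ) (k : ℤ) (p : Strip) :
    (⇑f.symm)^[i] (TrZ k p) = TrZ k ((⇑f.symm)^[i] p) := by
  induction i generalizing p with
  | zero => simp
  | succ n ih =>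
      rw [Function.iterate_succ_apply, Function.iterate_succ_apply,
        fsymm_TrZ f hcomm, ih]

lemma iter_sub (f : Strip ≃ₜ Strip) (i n : ℕ) (h : i ≤ n) (x : Strip) :
    (⇑f.symm)^[i] ((⇑f)^[n] x) = (⇑f)^[n - i] x := by
  have h1 : (⇑f)^[n] x = (⇑f)^[i] ((⇑f)^[n - i] x) := by
    rw [← Function.iterate_add_apply]
    congr 1
    omega
  rw [h1]
  exact Function.LeftInverse.iterate (fun y => f.symm_apply_apply y) i _

theorem stmt4 (f : Strip ≃ₜ Strip)
    (hcomm : ∀ p, f (T p) = T (f p))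
    (htrans : ∃ z : Strip, Dense (Set.range fun n : ℕ => (⇑f)^[n] z))
    (E : Set Strip) (hEopen : IsOpen E) (hEconn : IsConnected E)
    (hdisj : ∀ i : ℤ, i ≠ 0 → E ∩ (TrZ i '' E) = ∅)
    (N : ℕ) (hN : 0 < N) (i₀ : ℤ) (hi₀ : 0 ≤ i₀)
    (hback : (⇑f.symm)^[N] '' E ⊆ TrZ i₀ '' E)
    (hmiss : ∀ i : ℕ, 0 < i → i < N → ∀ j : ℤ,
      ((⇑f.symm)^[i] '' E) ∩ (TrZ j '' E) = ∅) :
    False := by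
  obtain ⟨z, hz⟩ := htrans
  -- uniqueness of the translate containing a point
  have uniq : ∀ (x : Strip) (j k : ℤ), TrZ (-j) x ∈ E → TrZ (-k) x ∈ E → j = k := by
    intro x j k hj hk
    by_contra hne
    have hd := hdisj (j - k) (sub_ne_zero.mpr hne)
    have hmem : TrZ (-k) x ∈ E ∩ TrZ (j - k) '' E := by
      refine ⟨hk, mem_TrZ_image.mpr ?_⟩
      rw [TrZ_add]
      have e : -(j - k) + -k = -j := by ring
      rwa [e]
    rw [hd] at hmem
    exact hmem
  -- backward step by N
  have hL2 : ∀ (n : ℕ) (j : ℤ), (⇑f)^[n] z ∈ TrZ j '' E → N ≤ n →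
      (⇑f)^[n - N] z ∈ TrZ (j + i₀) '' E := by
    intro n j hn hNn
    have h1 : TrZ (-j) ((⇑f)^[n] z) ∈ E := mem_TrZ_image.mp hn
    have h2 : (⇑f.symm)^[N] (TrZ (-j) ((⇑f)^[n] z)) ∈ TrZ i₀ '' E :=
      hback ⟨_, h1, rfl⟩
    rw [fsymm_iter_TrZ f hcomm, iter_sub f N n hNn] at h2
    apply mem_TrZ_image.mpr
    have h3 := mem_TrZ_image.mp h2
    rw [TrZ_add] at h3
    have e : -(j + i₀) = -i₀ + -j := by ring
    rwa [e]
  -- no visits at intermediate times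
  have hL3 : ∀ (n : ℕ) (j : ℤ), (⇑f)^[n] z ∈ TrZ j '' E →
      ∀ i : ℕ, 0 < i → i < N → i ≤ n → ∀ j' : ℤ,
      (⇑f)^[n - i] z ∈ TrZ j' '' E → False := by
    intro n j hn i hi hiN hin j' hni
    have h1 : TrZ (-j) ((⇑f)^[n - i] z) ∈ (⇑f.symm)^[i] '' E := by
      refine ⟨TrZ (-j) ((⇑f)^[n] z), mem_TrZ_image.mp hn, ?_⟩
      rw [fsymm_iter_TrZ f hcomm, iter_sub f i n hin]
    have h2 : TrZ (-j) ((⇑f)^[n - i] z) ∈ TrZ (j' - j) '' E := by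
      apply mem_TrZ_image.mpr
      rw [TrZ_add]
      have e : -(j' - j) + -j = -j' := by ring
      rw [e]
      exact mem_TrZ_image.mp hni
    have hd := hmiss i hi hiN (j' - j)
    rw [eq_empty_iff_forall_notMem] at hd
    exact hd _ ⟨h1, h2⟩
  -- chain lemma
  have chain : ∀ (n m : ℕ) (j j' : ℤ), m ≤ n →
      (⇑f)^[m] z ∈ TrZ j '' E → (⇑f)^[n] z ∈ TrZ j' '' E →
      ∃ k : ℕ, n = m + k * N ∧ j = j' + (k : ℤ) * i₀ := by
    intro n
    induction n using Nat.strong_induction_on with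
    | _ n ih =>
      intro m j j' hmn hm hn
      rcases eq_or_lt_of_le hmn with rfl | hlt
      · refine ⟨0, by simp, ?_⟩
        have := uniq _ j j' (mem_TrZ_image.mp hm) (mem_TrZ_image.mp hn)
        simp [this]
      · have hNle : m + N ≤ n := by
          by_contra hc
          refine hL3 n j' hn (n - m) (by omega) (by omega) (by omega) j ?_
          rw [show n - (n - m) = m by omega]
          exact hm
        have hstep : (⇑f)^[n - N] z ∈ TrZ (j' + i₀) '' E := hL2 n j' hn (by omega)
        obtain ⟨k, hk1, hk2⟩ := ih (n - N) (by omega) m j (j' + i₀) (by omega) hm hstep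
        refine ⟨k + 1, by have h' : (k + 1) * N = k * N + N := (by ring); omega, ?_⟩
        rw [hk2]
        push_cast
        ring
  -- density helper
  have hdense : ∀ U : Set Strip, IsOpen U → U.Nonempty → ∃ n : ℕ, (⇑f)^[n] z ∈ U := by
    intro U hU hUne
    obtain ⟨x, hx, hxU⟩ := hz.exists_mem_open hU hUne
    obtain ⟨n, rfl⟩ := hx
    exact ⟨n, hxU⟩
  have hopen : ∀ j : ℤ, IsOpen (TrZ j '' E) := fun j => isOpen_TrZ_image hEopen j
  have hne : ∀ j : ℤ, (TrZ j '' E).Nonempty := fun j => hEconn.nonempty.image _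
  obtain ⟨m, hm⟩ := hdense (TrZ 0 '' E) (hopen 0) (hne 0)
  obtain ⟨n, hn⟩ := hdense (TrZ 1 '' E) (hopen 1) (hne 1)
  rcases le_total m n with h | h
  · obtain ⟨k, _, hk⟩ := chain n m 0 1 h hm hn
    have hnn : (0 : ℤ) ≤ (k : ℤ) * i₀ := mul_nonneg (by positivity) hi₀
    linarith
  · obtain ⟨k, _, hk⟩ := chain m n 1 0 h hn hm
    -- hk : 1 = 0 + k * i₀
    have hi₀pos : 0 < i₀ := by
      rcases eq_or_lt_of_le hi₀ with h0 | h0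
      · exfalso
        rw [← h0] at hk
        simp at hk
      · exact h0
    -- any two visit times to E coincide
    have huniq : ∀ a b : ℕ, (⇑f)^[a] z ∈ TrZ 0 '' E → (⇑f)^[b] z ∈ TrZ 0 '' E →
        a = b := by
      have key : ∀ a b : ℕ, a ≤ b → (⇑f)^[a] z ∈ TrZ 0 '' E →
          (⇑f)^[b] z ∈ TrZ 0 '' E → a = b := by
        intro a b hab ha hb
        obtain ⟨k', hk1, hk2⟩ := chain b a 0 0 hab ha hb
        have h1 : (k' : ℤ) * i₀ = 0 := by linarith
        have h2 : (k' : ℤ) = 0 := by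
          rcases mul_eq_zero.mp h1 with hh | hh
          · exact hh
          · exfalso; omega
        have h3 : k' = 0 := by exact_mod_cast h2
        simp [h3] at hk1
        omega
      intro a b ha hb
      rcases le_total a b with hab | hab
      · exact key a b hab ha hb
      · exact (key b a hab hb ha).symm
    -- find a second point of TrZ 0 '' E distinct from f^[m] z
    set p : Strip := (⇑f)^[m] z with hp
    have hφ : Continuous (fun t : ℝ => ((t, p.2) : Strip)) := by fun_prop
    have hpre : IsOpen ((fun t : ℝ => ((t, p.2) : Strip)) ⁻¹' (TrZ 0 '' E)) :=
      (hopen 0).preimage hφ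
    have hp1 : p.1 ∈ (fun t : ℝ => ((t, p.2) : Strip)) ⁻¹' (TrZ 0 '' E) := by
      simp only [mem_preimage]
      have : ((p.1, p.2) : Strip) = p := rfl
      rw [this]
      exact hm
    obtain ⟨ε, hε, hball⟩ := Metric.isOpen_iff.mp hpre p.1 hp1
    have hqmem : ((p.1 + ε / 2, p.2) : Strip) ∈ TrZ 0 '' E := by
      apply hball
      rw [Metric.mem_ball, Real.dist_eq]
      rw [show p.1 + ε / 2 - p.1 = ε / 2 by ring, abs_of_pos (by linarith)]
      linarith
    have hqne : ((p.1 + ε / 2, p.2) : Strip) ≠ p := by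
      intro hq
      have := congrArg Prod.fst hq
      simp only at this
      linarith
    -- density gives a visit to (TrZ 0 '' E) \ {p}
    obtain ⟨n', hn'⟩ := hdense ((TrZ 0 '' E) ∩ {p}ᶜ)
      ((hopen 0).inter isOpen_compl_singleton)
      ⟨_, hqmem, hqne⟩
    have hn'E := hn'.1
    have hn'ne : (⇑f)^[n'] z ≠ p := hn'.2
    have : n' = m := huniq n' m hn'E hm
    rw [this] at hn'ne
    exact hn'ne rfl
end

section
/- Let D ⊂ ℝ×[0,1] be a closed nonempty set contained in (-∞,0]×[0,1], all of whose connected components are unbounded (to the left), and which is invariant under the translation z ↦ z-(1,0). Let Γ be a connected component of D. Then the complement of Γ in ℝ×[0,1] is connected. -/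
open Set

theorem stmt5 (f : Strip ≃ₜ Strip)
    (hcomm : ∀ p, f (T p) = T (f p))
    (htrans : ∃ z : Strip, Dense (Set.range fun n : ℕ => (⇑f)^[n] z))
    (D : Set Strip) (hDclosed : IsClosed D) (hDne : D.Nonempty)
    (hDleft : D ⊆ {p : Strip | p.1 ≤ 0})
    (hDcomp : ∀ z ∈ D, ∀ M : ℝ, ∃ p ∈ connectedComponentIn D z, p.1 < M)
    (hDtr : TrZ (-1) '' D ⊆ D)
    (hDinv : ⇑f '' D ⊆ D)
    (hDbd : ∀ p ∈ D, (p.2 : ℝ) ≠ 0 ∧ (p.2 : ℝ) ≠ 1)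
    (z : Strip) (hz : z ∈ D) :
    IsConnected ((connectedComponentIn D z)ᶜ) := by
  classical
  obtain ⟨z₀, hz₀⟩ := htrans
  set g : Strip → Strip := ⇑f.symm with hgdef
  -- basic membership helpers
  have hfD : ∀ p, p ∈ D → f p ∈ D := fun p hp => hDinv ⟨p, hp, rfl⟩
  have hgDc : ∀ p, p ∈ Dᶜ → g p ∈ Dᶜ := by
    intro p hp hmem
    have h2 : f (f.symm p) ∈ D := hfD _ hmem
    rw [f.apply_symm_apply] at h2
    exact hp h2
  have hTDc : ∀ p, p ∈ Dᶜ → T p ∈ Dᶜ := by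
    intro p hp hmem
    apply hp
    have heq : TrZ (-1) (T p) = p := by
      simp [TrZ, T, Prod.ext_iff]
    have h2 : TrZ (-1) (T p) ∈ D := hDtr ⟨T p, hmem, rfl⟩
    rwa [heq] at h2
  -- dense images under f
  have hdense_image : ∀ (s : Set Strip), Dense s → Dense (⇑f '' s) := by
    intro s hs x
    have h1 : f.symm x ∈ closure s := hs _
    have h2 : x ∈ ⇑f '' closure s := ⟨f.symm x, h1, f.apply_symm_apply x⟩
    exact image_closure_subset_closure_image f.continuous h2
  have himg : ∀ (m : ℕ) (s : Set Strip), Dense s → Dense ((⇑f)^[m] '' s) := by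
    intro m
    induction m with
    | zero => intro s hs; simpa using hs
    | succ m ih =>
      intro s hs
      rw [Function.iterate_succ', Set.image_comp]
      exact hdense_image _ (ih s hs)
  have htail : ∀ n : ℕ, Dense (Set.range fun k : ℕ => (⇑f)^[n + k] z₀) := by
    intro n
    have hr : (Set.range fun k : ℕ => (⇑f)^[n + k] z₀)
        = (⇑f)^[n] '' (Set.range fun k : ℕ => (⇑f)^[k] z₀) := by
      ext x
      constructor
      · rintro ⟨k, rfl⟩
        exact ⟨(⇑f)^[k] z₀, ⟨k, rfl⟩, (Function.iterate_add_apply f n k z₀).symm⟩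
      · rintro ⟨y, ⟨k, rfl⟩, rfl⟩
        exact ⟨k, Function.iterate_add_apply f n k z₀⟩
    rw [hr]
    exact himg n _ hz₀
  -- the dense orbit avoids D
  have horb : ∀ n : ℕ, (⇑f)^[n] z₀ ∈ Dᶜ := by
    intro n hn
    have hstay : ∀ k : ℕ, (⇑f)^[n + k] z₀ ∈ D := by
      intro k
      induction k with
      | zero => simpa using hn
      | succ k ih =>
        have he : (⇑f)^[n + (k+1)] z₀ = f ((⇑f)^[n + k] z₀) := by
          rw [← Nat.add_assoc, Function.iterate_succ_apply']
        rw [he]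
        exact hfD _ ih
    have hsub : (Set.range fun k : ℕ => (⇑f)^[n + k] z₀) ⊆ D := by
      rintro x ⟨k, rfl⟩; exact hstay k
    have huniv : (univ : Set Strip) ⊆ D := by
      calc (univ : Set Strip) = closure (Set.range fun k : ℕ => (⇑f)^[n + k] z₀) :=
            ((htail n).closure_eq).symm
        _ ⊆ closure D := closure_mono hsub
        _ = D := hDclosed.closure_eq
    have hv : ((1:ℝ), (⟨1/2, by norm_num⟩ : Set.Icc (0:ℝ) 1)) ∈ D := huniv (mem_univ _)
    have := hDleft hv
    norm_num at this
  have hDcdense : Dense (Dᶜ : Set Strip) := by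
    apply hz₀.mono
    rintro x ⟨k, rfl⟩; exact horb k
  -- the far-right reference point and region
  set v₀ : Strip := ((1:ℝ), ⟨1/2, by norm_num⟩) with hv₀def
  have hv₀Dc : v₀ ∈ Dᶜ := by
    intro h
    have := hDleft h
    norm_num [hv₀def] at this
  set R : Set Strip := {p : Strip | 0 < p.1} with hRdef
  have hRDc : R ⊆ Dᶜ := by
    intro p hp hD
    have h1 : p.1 ≤ 0 := hDleft hD
    exact absurd h1 (not_le.mpr hp)
  have hRconn : IsPreconnected R := by
    have hx : R = (Set.Ioi (0:ℝ)) ×ˢ (univ : Set (Set.Icc (0:ℝ) 1)) := by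
      ext p; simp [hRdef, Set.mem_prod]
    rw [hx]
    exact isPreconnected_Ioi.prod isPreconnected_univ
  have hv₀R : v₀ ∈ R := by simp [hRdef, hv₀def]
  have hRU₀ : R ⊆ connectedComponentIn Dᶜ v₀ :=
    hRconn.subset_connectedComponentIn hv₀R hRDc
  have hU₀Dc : connectedComponentIn Dᶜ v₀ ⊆ Dᶜ := connectedComponentIn_subset _ _
  -- translation iterates
  have hTn : ∀ (n : ℕ) (p : Strip), T^[n] p = (p.1 + n, p.2) := by
    intro n
    induction n with
    | zero => intro p; simp
    | succ n ih =>
      intro p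
      rw [Function.iterate_succ_apply', ih]
      simp [T, Prod.ext_iff]
      push_cast
      ring
  have hTnDc : ∀ (n : ℕ) (p : Strip), p ∈ Dᶜ → T^[n] p ∈ Dᶜ := by
    intro n
    induction n with
    | zero => intro p hp; simpa using hp
    | succ n ih =>
      intro p hp
      rw [Function.iterate_succ_apply']
      exact hTDc _ (ih p hp)
  have hgT : ∀ p, g (T p) = T (g p) := by
    intro p
    calc g (T p) = f.symm (T (f (f.symm p))) := by rw [f.apply_symm_apply]
      _ = f.symm (f (T (f.symm p))) := by rw [hcomm]
      _ = T (g p) := f.symm_apply_apply _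
  have hgTn : ∀ (n : ℕ) (p : Strip), g (T^[n] p) = T^[n] (g p) := by
    intro n
    induction n with
    | zero => intro p; simp
    | succ n ih =>
      intro p
      rw [Function.iterate_succ_apply', hgT, ih]
      exact (Function.iterate_succ_apply' T n (g p)).symm
  -- backward invariance of the big component
  have hgU₀ : g '' connectedComponentIn Dᶜ v₀ ⊆ connectedComponentIn Dᶜ v₀ := by
    obtain ⟨n, hn⟩ := exists_nat_gt (-(g v₀).1)
    have hq : T^[n] v₀ ∈ Dᶜ := hTnDc n v₀ hv₀Dc
    have hqU₀ : T^[n] v₀ ∈ connectedComponentIn Dᶜ v₀ := by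
      apply hRU₀
      rw [hTn]
      simp only [hRdef, Set.mem_setOf_eq]
      have : (0:ℝ) < 1 := one_pos
      simp [hv₀def]
      positivity
    have hgq : g (T^[n] v₀) ∈ Dᶜ := hgDc _ hq
    have hgqR : g (T^[n] v₀) ∈ R := by
      rw [hgTn, hTn]
      simp only [hRdef, Set.mem_setOf_eq]
      linarith
    have hpc : IsPreconnected (g '' connectedComponentIn Dᶜ v₀) :=
      isPreconnected_connectedComponentIn.image _ f.symm.continuous.continuousOn
    have hsub : g '' connectedComponentIn Dᶜ v₀ ⊆ Dᶜ := by
      rintro x ⟨y, hy, rfl⟩; exact hgDc y (hU₀Dc hy)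
    have hmem : g (T^[n] v₀) ∈ g '' connectedComponentIn Dᶜ v₀ := ⟨_, hqU₀, rfl⟩
    have h1 := hpc.subset_connectedComponentIn hmem hsub
    exact h1.trans (connectedComponentIn_eq (hRU₀ hgqR)).symm.subset
  have hgU₀n : ∀ (k : ℕ) (s : Set Strip), s ⊆ connectedComponentIn Dᶜ v₀ →
      g^[k] '' s ⊆ connectedComponentIn Dᶜ v₀ := by
    intro k
    induction k with
    | zero => intro s hs; simpa using hs
    | succ k ih =>
      intro s hs
      rw [Function.iterate_succ, Set.image_comp]
      exact ih _ ((Set.image_mono hs).trans hgU₀)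
  have hgiterDc : ∀ (k : ℕ) (p : Strip), p ∈ Dᶜ → g^[k] p ∈ Dᶜ := by
    intro k
    induction k with
    | zero => intro p hp; simpa using hp
    | succ k ih =>
      intro p hp
      rw [Function.iterate_succ_apply']
      exact hgDc _ (ih p hp)
  -- metric balls in the strip are preconnected
  have hball : ∀ (p : Strip) (ε : ℝ), IsPreconnected (Metric.ball p ε) := by
    intro p ε
    have h1 : IsPreconnected (Metric.ball p.1 ε) := by
      rw [Real.ball_eq_Ioo]; exact isPreconnected_Ioo
    have h2 : IsPreconnected (Metric.ball p.2 ε) := by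
      have hb : Metric.ball p.2 ε = Subtype.val ⁻¹' (Metric.ball (p.2 : ℝ) ε) := by
        ext y
        simp [Metric.mem_ball, Subtype.dist_eq]
      rw [hb]
      apply (Topology.IsInducing.subtypeVal.isPreconnected_image).mp
      rw [Subtype.image_preimage_coe]
      apply Set.OrdConnected.isPreconnected
      exact Set.ordConnected_Icc.inter (by rw [Real.ball_eq_Ioo]; exact Set.ordConnected_Ioo)
    have h3 := h1.prod h2
    rwa [ball_prod_same] at h3
  -- main claim : Dᶜ is contained in the component of v₀
  have hmain : (Dᶜ : Set Strip) ⊆ connectedComponentIn Dᶜ v₀ := by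
    intro p hp
    obtain ⟨ε, hε, hballsub⟩ := Metric.isOpen_iff.mp hDclosed.isOpen_compl p hp
    have hBU : Metric.ball p ε ⊆ connectedComponentIn Dᶜ p :=
      (hball p ε).subset_connectedComponentIn (Metric.mem_ball_self hε) hballsub
    have hRopen : IsOpen R := by
      have : R = (fun q : Strip => q.1) ⁻¹' (Set.Ioi 0) := rfl
      rw [this]
      exact isOpen_Ioi.preimage continuous_fst
    obtain ⟨x, ⟨a, hax⟩, hxR⟩ := hz₀.exists_mem_open hRopen ⟨v₀, hv₀R⟩
    obtain ⟨y, ⟨k, hky⟩, hyB⟩ := (htail a).exists_mem_open Metric.isOpen_ball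
      ⟨p, Metric.mem_ball_self hε⟩
    subst hax hky
    have hUDc : connectedComponentIn Dᶜ p ⊆ Dᶜ := connectedComponentIn_subset _ _
    have hUpc : IsPreconnected (connectedComponentIn Dᶜ p) := isPreconnected_connectedComponentIn
    have hLI : Function.LeftInverse g ⇑f := fun x => f.symm_apply_apply x
    -- base step : g^[k] '' U ⊆ U₀
    have hbase : g^[k] '' connectedComponentIn Dᶜ p ⊆ connectedComponentIn Dᶜ v₀ := by
      have hzb : (⇑f)^[a + k] z₀ ∈ connectedComponentIn Dᶜ p := hBU hyB
      have hzaU₀ : (⇑f)^[a] z₀ ∈ connectedComponentIn Dᶜ v₀ := hRU₀ hxR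
      have hga : g^[k] ((⇑f)^[a + k] z₀) = (⇑f)^[a] z₀ := by
        have h1 : (⇑f)^[a + k] z₀ = (⇑f)^[k] ((⇑f)^[a] z₀) := by
          rw [Nat.add_comm, Function.iterate_add_apply]
        rw [h1]
        exact hLI.iterate k _
      have hpc : IsPreconnected (g^[k] '' connectedComponentIn Dᶜ p) :=
        hUpc.image _ (f.symm.continuous.iterate k).continuousOn
      have hsub : g^[k] '' connectedComponentIn Dᶜ p ⊆ Dᶜ := by
        rintro x ⟨y, hy, rfl⟩; exact hgiterDc k y (hUDc hy)
      have hmem : (⇑f)^[a] z₀ ∈ g^[k] '' connectedComponentIn Dᶜ p := ⟨_, hzb, hga⟩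
      have h2 := hpc.subset_connectedComponentIn hmem hsub
      exact h2.trans (connectedComponentIn_eq hzaU₀).symm.subset
    -- second, late visit to the ball
    obtain ⟨y2, ⟨j, hjy⟩, hy2B⟩ := (htail (a + k + k)).exists_mem_open Metric.isOpen_ball
      ⟨p, Metric.mem_ball_self hε⟩
    subst hjy
    have hz2U : (⇑f)^[a + k + k + j] z₀ ∈ connectedComponentIn Dᶜ p := hBU hy2B
    have hgb : g^[k + j] ((⇑f)^[a + k + k + j] z₀) = (⇑f)^[a + k] z₀ := by
      have h1 : (⇑f)^[a + k + k + j] z₀ = (⇑f)^[k + j] ((⇑f)^[a + k] z₀) := by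
        rw [← Function.iterate_add_apply]
        congr 1
        omega
      rw [h1]
      exact hLI.iterate (k + j) _
    have hsub2 : g^[k + j] '' connectedComponentIn Dᶜ p ⊆ connectedComponentIn Dᶜ v₀ := by
      have he : g^[k + j] = g^[j] ∘ g^[k] := by
        rw [Nat.add_comm, Function.iterate_add]
      rw [he, Set.image_comp]
      exact hgU₀n j _ hbase
    have hzbU₀ : (⇑f)^[a + k] z₀ ∈ connectedComponentIn Dᶜ v₀ :=
      hsub2 ⟨_, hz2U, hgb⟩
    have hzbU : (⇑f)^[a + k] z₀ ∈ connectedComponentIn Dᶜ p := hBU hyB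
    have hfin : connectedComponentIn Dᶜ p = connectedComponentIn Dᶜ v₀ :=
      (connectedComponentIn_eq hzbU).trans (connectedComponentIn_eq hzbU₀).symm
    have hpU : p ∈ connectedComponentIn Dᶜ p := mem_connectedComponentIn hp
    rwa [hfin] at hpU
  -- conclude
  have hDcsub : (Dᶜ : Set Strip) ⊆ (connectedComponentIn D z)ᶜ :=
    compl_subset_compl.mpr (connectedComponentIn_subset _ _)
  constructor
  · exact ⟨v₀, hDcsub hv₀Dc⟩
  · have hDcpre : IsPreconnected (Dᶜ : Set Strip) := by
      have hx : (Dᶜ : Set Strip) = connectedComponentIn Dᶜ v₀ :=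
        Set.Subset.antisymm hmain (connectedComponentIn_subset _ _)
      rw [hx]
      exact isPreconnected_connectedComponentIn
    exact hDcpre.subset_closure hDcsub
      (by rw [hDcdense.closure_eq]; exact subset_univ _)
end

section
/- Let Γ ⊂ ℝ×[0,1] be a closed connected set that is unbounded to the left, and let a ∈ ℝ be such that Γ intersects the vertical {a}×[0,1]. Then Γ ∩ ((-∞,a]×[0,1]) has at least one unbounded connected component which intersects {a}×[0,1]. -/
open Set

/-- Left half-strip up to `a`. -/
def Vminus (a : ℝ) : Set Strip := {p : Strip | p.1 ≤ a}

/-- The compact truncation of `Γ` between abscissas `b` and `a`. -/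
def Kset (Γ : Set Strip) (b a : ℝ) : Set Strip :=
  Γ ∩ {p | b ≤ p.1 ∧ p.1 ≤ a}

lemma Kset_subset (Γ : Set Strip) (b a : ℝ) : Kset Γ b a ⊆ Γ := inter_subset_left

lemma isClosed_slab (b a : ℝ) : IsClosed {p : Strip | b ≤ p.1 ∧ p.1 ≤ a} := by
  have h1 : IsClosed {p : Strip | b ≤ p.1} :=
    isClosed_le continuous_const continuous_fst
  have h2 : IsClosed {p : Strip | p.1 ≤ a} :=
    isClosed_le continuous_fst continuous_const
  exact (h1.inter h2 : _)

lemma isClosed_Kset {Γ : Set Strip} (hΓ : IsClosed Γ) (b a : ℝ) :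
    IsClosed (Kset Γ b a) := hΓ.inter (isClosed_slab b a)

lemma isCompact_Kset {Γ : Set Strip} (hΓ : IsClosed Γ) (b a : ℝ) :
    IsCompact (Kset Γ b a) := by
  have hbig : IsCompact ((Icc b a) ×ˢ (univ : Set (Set.Icc (0:ℝ) 1))) :=
    isCompact_Icc.prod isCompact_univ
  refine hbig.of_isClosed_subset (isClosed_Kset hΓ b a) ?_
  rintro p ⟨-, hb, ha⟩
  exact ⟨⟨hb, ha⟩, trivial⟩

/-- In a compact T2 space: if the connected component of `x` avoids a closed set `F`,
then some clopen neighbourhood of `x` avoids `F`. -/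
lemma exists_isClopen_disjoint {X : Type*} [TopologicalSpace X] [T2Space X] [CompactSpace X]
    (x : X) {F : Set X} (hF : IsClosed F) (h : connectedComponent x ∩ F = ∅) :
    ∃ u : Set X, IsClopen u ∧ x ∈ u ∧ u ∩ F = ∅ := by
  haveI : Nonempty {s : Set X // IsClopen s ∧ x ∈ s} :=
    ⟨⟨univ, isClopen_univ, mem_univ x⟩⟩
  have hdir : Directed (· ⊇ ·) (fun s : {s : Set X // IsClopen s ∧ x ∈ s} => (s : Set X)) := by
    intro s t
    exact ⟨⟨s.1 ∩ t.1, s.2.1.inter t.2.1, ⟨s.2.2, t.2.2⟩⟩, inter_subset_left, inter_subset_right⟩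
  have hFc : IsCompact F := hF.isCompact
  have hempty : (F ∩ ⋂ s : {s : Set X // IsClopen s ∧ x ∈ s}, (s : Set X)) = ∅ := by
    rw [← connectedComponent_eq_iInter_isClopen, inter_comm]
    exact h
  obtain ⟨s, hs⟩ := hFc.elim_directed_family_closed _ (fun s => s.2.1.1) hempty hdir
  exact ⟨s.1, s.2.1, s.2.2, by rw [inter_comm]; exact hs⟩

/-- Ambient version: a relatively clopen piece of a compact set `K` containing `z`,
avoiding `F`, and saturated for connected components in `K`. -/
lemma key_clopen {α : Type*} [TopologicalSpace α] [T2Space α] {K F : Set α}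
    (hK : IsCompact K) (hF : IsClosed F) {z : α} (hz : z ∈ K)
    (hdis : connectedComponentIn K z ∩ F = ∅) :
    ∃ U O : Set α, IsOpen O ∧ U = O ∩ K ∧ z ∈ U ∧ IsClosed U ∧ IsClosed (K \ U) ∧
      U ∩ F = ∅ ∧ ∀ y ∈ U, connectedComponentIn K y ⊆ U := by
  haveI : CompactSpace K := isCompact_iff_compactSpace.mp hK
  set x : K := ⟨z, hz⟩
  have hF' : IsClosed ((Subtype.val : K → α) ⁻¹' F) := hF.preimage continuous_subtype_val
  have hdis' : connectedComponent x ∩ (Subtype.val ⁻¹' F) = ∅ := by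
    rw [eq_empty_iff_forall_notMem]
    rintro y ⟨hy1, hy2⟩
    have : (y : α) ∈ connectedComponentIn K z ∩ F := by
      refine ⟨?_, hy2⟩
      rw [connectedComponentIn_eq_image hz]
      exact mem_image_of_mem _ hy1
    rw [hdis] at this
    exact this
  obtain ⟨u, hu, hxu, huF⟩ := exists_isClopen_disjoint x hF' hdis'
  obtain ⟨O, hO, hOu⟩ := isOpen_induced_iff.mp hu.2
  refine ⟨Subtype.val '' u, O, hO, ?_, ⟨x, hxu, rfl⟩, ?_, ?_, ?_, ?_⟩
  · rw [← hOu, Subtype.image_preimage_coe, inter_comm]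
  · exact (hu.1.isCompact.image continuous_subtype_val).isClosed
  · have : K \ (Subtype.val '' u) = Subtype.val '' uᶜ := by
      ext p
      constructor
      · rintro ⟨hpK, hpu⟩
        exact ⟨⟨p, hpK⟩, fun hc => hpu ⟨⟨p, hpK⟩, hc, rfl⟩, rfl⟩
      · rintro ⟨q, hq, rfl⟩
        exact ⟨q.2, fun ⟨q', hq', hqq⟩ => hq (by rwa [← Subtype.ext hqq.symm] at hq')⟩
    rw [this]
    exact ((hu.2.isClosed_compl).isCompact.image continuous_subtype_val).isClosed
  · rw [eq_empty_iff_forall_notMem]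
    rintro p ⟨⟨q, hq, rfl⟩, hpF⟩
    have : q ∈ u ∩ (Subtype.val ⁻¹' F) := ⟨hq, hpF⟩
    rw [huF] at this
    exact this
  · rintro y ⟨q, hq, rfl⟩
    have hyK : (q : α) ∈ K := q.2
    rw [connectedComponentIn_eq_image hyK]
    have : connectedComponent (⟨(q : α), hyK⟩ : K) ⊆ u := by
      apply hu.connectedComponent_subset
      simpa using hq
    exact image_mono this

/-- The set of points of `Γ` on the fiber `V a` whose connected component in the
truncation `Kset Γ b a` reaches the fiber at `b`. -/
def good (Γ : Set Strip) (a b : ℝ) : Set Strip :=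
  {z | z ∈ Γ ∧ z.1 = a ∧ (connectedComponentIn (Kset Γ b a) z ∩ {p | p.1 = b}).Nonempty}

lemma good_mem_Kset {Γ : Set Strip} {a b : ℝ} (hba : b ≤ a) {z : Strip}
    (hz : z ∈ Γ) (hza : z.1 = a) : z ∈ Kset Γ b a :=
  ⟨hz, by simp only [mem_setOf_eq, hza]; exact ⟨hba, le_refl a⟩⟩

lemma isClosed_good {Γ : Set Strip} (hΓ : IsClosed Γ) {a b : ℝ} (hba : b ≤ a) :
    IsClosed (good Γ a b) := by
  rw [← closure_subset_iff_isClosed]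
  intro z hzc
  have hsub : good Γ a b ⊆ Γ ∩ {p | p.1 = a} := fun w hw => ⟨hw.1, hw.2.1⟩
  have hcl : IsClosed (Γ ∩ {p : Strip | p.1 = a}) :=
    hΓ.inter (isClosed_eq continuous_fst continuous_const)
  have hzΓa : z ∈ Γ ∩ {p : Strip | p.1 = a} :=
    hcl.closure_subset ((closure_mono hsub) hzc)
  refine ⟨hzΓa.1, hzΓa.2, ?_⟩
  by_contra hne
  rw [not_nonempty_iff_eq_empty] at hne
  set K := Kset Γ b a with hK
  have hzK : z ∈ K := good_mem_Kset hba hzΓa.1 hzΓa.2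
  have hF : IsClosed (K ∩ {p : Strip | p.1 = b}) :=
    (isClosed_Kset hΓ b a).inter (isClosed_eq continuous_fst continuous_const)
  have hdis : connectedComponentIn K z ∩ (K ∩ {p : Strip | p.1 = b}) = ∅ := by
    rw [eq_empty_iff_forall_notMem]
    rintro p ⟨hp1, -, hp3⟩
    have : p ∈ connectedComponentIn K z ∩ {p : Strip | p.1 = b} := ⟨hp1, hp3⟩
    rw [hne] at this
    exact this
  obtain ⟨U, O, hO, hUO, hzU, -, -, hUF, hsat⟩ :=
    key_clopen (isCompact_Kset hΓ b a) hF hzK hdis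
  have hzO : z ∈ O := by rw [hUO] at hzU; exact hzU.1
  obtain ⟨y, hyO, hy⟩ := mem_closure_iff.mp hzc O hO hzO
  have hyK : y ∈ K := good_mem_Kset hba hy.1 hy.2.1
  have hyU : y ∈ U := by rw [hUO]; exact ⟨hyO, hyK⟩
  obtain ⟨p, hp1, hp2⟩ := hy.2.2
  have hpU : p ∈ U := hsat y hyU hp1
  have hpK : p ∈ K := connectedComponentIn_subset K y hp1
  have : p ∈ U ∩ (K ∩ {p : Strip | p.1 = b}) := ⟨hpU, hpK, hp2⟩
  rw [hUF] at this
  exact this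

lemma good_nonempty {Γ : Set Strip} (hclosed : IsClosed Γ) (hconn : IsConnected Γ)
    (hunb : ∀ M : ℝ, ∃ p ∈ Γ, p.1 < M) {a : ℝ} (hmeet : (Γ ∩ V a).Nonempty)
    {b : ℝ} (hba : b < a) : (good Γ a b).Nonempty := by
  by_contra hne
  rw [not_nonempty_iff_eq_empty] at hne
  set K := Kset Γ b a with hK
  set F := K ∩ {p : Strip | p.1 = b} with hFdef
  have hKcomp : IsCompact K := isCompact_Kset hclosed b a
  have hFcl : IsClosed F :=
    (isClosed_Kset hclosed b a).inter (isClosed_eq continuous_fst continuous_const)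
  set S0 := Γ ∩ {p : Strip | p.1 = a} with hS0
  have hS0K : S0 ⊆ K := fun w hw => good_mem_Kset hba.le hw.1 hw.2
  have hS0comp : IsCompact S0 :=
    hKcomp.of_isClosed_subset (hclosed.inter (isClosed_eq continuous_fst continuous_const)) hS0K
  -- for each z in S0, a relatively clopen neighbourhood avoiding F
  have hch : ∀ z : S0, ∃ U O : Set Strip, IsOpen O ∧ U = O ∩ K ∧ (z : Strip) ∈ U ∧
      IsClosed U ∧ IsClosed (K \ U) ∧ U ∩ F = ∅ ∧
      ∀ y ∈ U, connectedComponentIn K y ⊆ U := by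
    rintro ⟨z, hz⟩
    have hzK : z ∈ K := hS0K hz
    have hdis : connectedComponentIn K z ∩ F = ∅ := by
      rw [eq_empty_iff_forall_notMem]
      rintro p ⟨hp1, -, hp3⟩
      have hzgood : z ∈ good Γ a b := ⟨hz.1, hz.2, ⟨p, hp1, hp3⟩⟩
      rw [hne] at hzgood
      exact hzgood
    exact key_clopen hKcomp hFcl hzK hdis
  choose Ufun Ofun hOopen hUO hzU hUcl hKUcl hUF hsat using hch
  have hcover : S0 ⊆ ⋃ z : S0, Ofun z := by
    intro y hy
    refine mem_iUnion.mpr ⟨⟨y, hy⟩, ?_⟩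
    have := hzU ⟨y, hy⟩
    rw [hUO ⟨y, hy⟩] at this
    exact this.1
  obtain ⟨t, ht⟩ := hS0comp.elim_finite_subcover Ofun hOopen hcover
  set UU : Set Strip := ⋃ z ∈ t, Ufun z with hUU
  set OO : Set Strip := ⋃ z ∈ t, Ofun z with hOO
  have hUUOO : UU = OO ∩ K := by
    rw [hUU, hOO]
    ext p
    simp only [mem_iUnion, mem_inter_iff, exists_prop]
    constructor
    · rintro ⟨z, hzt, hp⟩
      rw [hUO z] at hp
      exact ⟨⟨z, hzt, hp.1⟩, hp.2⟩
    · rintro ⟨⟨z, hzt, hp⟩, hpK⟩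
      exact ⟨z, hzt, by rw [hUO z]; exact ⟨hp, hpK⟩⟩
  have hUUK : UU ⊆ K := by rw [hUUOO]; exact inter_subset_right
  have hUUcl : IsClosed UU := isClosed_biUnion_finset fun z _ => hUcl z
  have hKUUcl : IsClosed (K \ UU) := by
    have : K \ UU = K ∩ OOᶜ := by
      rw [hUUOO]
      ext p
      simp only [mem_diff, mem_inter_iff, mem_compl_iff, not_and]
      tauto
    rw [this]
    exact (isClosed_Kset hclosed b a).inter (isClosed_compl_iff.mpr
      (isOpen_biUnion fun z _ => hOopen z))
  have hS0UU : S0 ⊆ UU := by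
    intro y hy
    obtain ⟨z, hzt, hyO⟩ := mem_iUnion₂.mp (ht hy)
    refine mem_iUnion₂.mpr ⟨z, hzt, ?_⟩
    rw [hUO z]
    exact ⟨hyO, hS0K hy⟩
  have hUUF : UU ∩ F = ∅ := by
    rw [eq_empty_iff_forall_notMem]
    rintro p ⟨hp1, hp2⟩
    obtain ⟨z, hzt, hpz⟩ := mem_iUnion₂.mp hp1
    have : p ∈ Ufun z ∩ F := ⟨hpz, hp2⟩
    rw [hUF z] at this
    exact this
  -- the separation
  set A : Set Strip := UU ∪ (Γ ∩ {p | a ≤ p.1}) with hA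
  set B : Set Strip := (K \ UU) ∪ (Γ ∩ {p | p.1 ≤ b}) with hB
  have hAcl : IsClosed A := hUUcl.union (hclosed.inter (isClosed_le continuous_const continuous_fst))
  have hBcl : IsClosed B := hKUUcl.union (hclosed.inter (isClosed_le continuous_fst continuous_const))
  have hcover2 : Γ ⊆ A ∪ B := by
    intro p hp
    by_cases h1 : a ≤ p.1
    · exact Or.inl (Or.inr ⟨hp, h1⟩)
    by_cases h2 : p.1 ≤ b
    · exact Or.inr (Or.inr ⟨hp, h2⟩)
    have hpK : p ∈ K := ⟨hp, le_of_not_ge h2, le_of_not_ge h1⟩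
    by_cases h3 : p ∈ UU
    · exact Or.inl (Or.inl h3)
    · exact Or.inr (Or.inl ⟨hpK, h3⟩)
  have hAne : (Γ ∩ A).Nonempty := by
    obtain ⟨z0, hz0⟩ := hmeet
    exact ⟨z0, hz0.1, Or.inr ⟨hz0.1, le_of_eq hz0.2.symm⟩⟩
  have hBne : (Γ ∩ B).Nonempty := by
    obtain ⟨q, hq, hqb⟩ := hunb b
    exact ⟨q, hq, Or.inr ⟨hq, hqb.le⟩⟩
  have hAB : A ∩ B = ∅ := by
    rw [eq_empty_iff_forall_notMem]
    rintro p ⟨hpA, hpB⟩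
    rcases hpA with hpU | ⟨hpΓ, hpa⟩
    · rcases hpB with ⟨-, hpnU⟩ | ⟨-, hpb⟩
      · exact hpnU hpU
      · have hpK := hUUK hpU
        have : p.1 = b := le_antisymm hpb hpK.2.1
        have : p ∈ UU ∩ F := ⟨hpU, hpK, this⟩
        rw [hUUF] at this
        exact this
    · rcases hpB with ⟨hpK, hpnU⟩ | ⟨-, hpb⟩
      · have : p.1 = a := le_antisymm hpK.2.2 hpa
        exact hpnU (hS0UU ⟨hpΓ, this⟩)
      · exact absurd (le_trans hpa hpb) (not_le.mpr hba)
  have := (isPreconnected_closed_iff.mp hconn.isPreconnected) A B hAcl hBcl hcover2 hAne hBne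
  obtain ⟨p, -, hpAB⟩ := this
  rw [eq_empty_iff_forall_notMem] at hAB
  exact hAB p hpAB

/-- Monotonicity: reaching a farther fiber implies reaching a nearer one. -/
lemma good_mono {Γ : Set Strip} (hclosed : IsClosed Γ) {a b b' : ℝ}
    (hb'b : b' ≤ b) (hba : b < a) : good Γ a b' ⊆ good Γ a b := by
  rintro z ⟨hzΓ, hza, hreach⟩
  refine ⟨hzΓ, hza, ?_⟩
  by_contra hne
  rw [not_nonempty_iff_eq_empty] at hne
  have hb'a : b' ≤ a := le_trans hb'b hba.le
  set K' := Kset Γ b' a with hK'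
  have hzK' : z ∈ K' := good_mem_Kset hb'a hzΓ hza
  set C := connectedComponentIn K' z with hC
  have hCK' : C ⊆ K' := connectedComponentIn_subset K' z
  have hCconn : IsPreconnected C := isPreconnected_connectedComponentIn
  have hzC : z ∈ C := mem_connectedComponentIn hzK'
  -- C is compact
  have hCcl : IsClosed C := by
    haveI : CompactSpace K' := isCompact_iff_compactSpace.mp (isCompact_Kset hclosed b' a)
    rw [hC, connectedComponentIn_eq_image hzK']
    exact ((isClosed_connectedComponent).isCompact.image continuous_subtype_val).isClosed
  have hCcomp : IsCompact C := (isCompact_Kset hclosed b' a).of_isClosed_subset hCcl hCK'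
  -- truncation of C
  set C' := C ∩ {p : Strip | b ≤ p.1 ∧ p.1 ≤ a} with hC'
  have hC'comp : IsCompact C' := hCcomp.of_isClosed_subset (hCcl.inter (isClosed_slab b a))
    inter_subset_left
  have hzC' : z ∈ C' := ⟨hzC, by simp only [mem_setOf_eq, hza]; exact ⟨hba.le, le_refl a⟩⟩
  have hC'K : C' ⊆ Kset Γ b a := by
    rintro p ⟨hpC, hpb, hpa⟩
    exact ⟨(Kset_subset Γ b' a) (hCK' hpC), hpb, hpa⟩
  set F := C' ∩ {p : Strip | p.1 = b} with hF
  have hFcl : IsClosed F := (hCcl.inter (isClosed_slab b a)).inter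
    (isClosed_eq continuous_fst continuous_const)
  have hdis : connectedComponentIn C' z ∩ F = ∅ := by
    rw [eq_empty_iff_forall_notMem]
    rintro p ⟨hp1, -, hp3⟩
    have hsub : connectedComponentIn C' z ⊆ connectedComponentIn (Kset Γ b a) z :=
      connectedComponentIn_mono z hC'K
    have : p ∈ connectedComponentIn (Kset Γ b a) z ∩ {p : Strip | p.1 = b} :=
      ⟨hsub hp1, hp3⟩
    rw [hne] at this
    exact this
  obtain ⟨U, O, hO, hUO, hzU, hUcl, hC'Ucl, hUF, -⟩ := key_clopen hC'comp hFcl hzC' hdis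
  have hUC' : U ⊆ C' := by rw [hUO]; exact inter_subset_right
  -- separation of C
  set A : Set Strip := U with hA
  set B : Set Strip := (C' \ U) ∪ (C ∩ {p | p.1 ≤ b}) with hB
  have hBcl : IsClosed B := hC'Ucl.union (hCcl.inter (isClosed_le continuous_fst continuous_const))
  have hcover2 : C ⊆ A ∪ B := by
    intro p hp
    by_cases h2 : b ≤ p.1
    · have hpC' : p ∈ C' := ⟨hp, h2, (hCK' hp).2.2⟩
      by_cases h3 : p ∈ U
      · exact Or.inl h3
      · exact Or.inr (Or.inl ⟨hpC', h3⟩)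
    · exact Or.inr (Or.inr ⟨hp, (le_of_not_ge h2)⟩)
  have hAne : (C ∩ A).Nonempty := ⟨z, hzC, hzU⟩
  have hBne : (C ∩ B).Nonempty := by
    obtain ⟨q, hq1, hq2⟩ := hreach
    exact ⟨q, hq1, Or.inr ⟨hq1, le_of_le_of_eq (le_of_eq (hq2 : q.1 = b')) rfl |>.trans hb'b⟩⟩
  have hAB : A ∩ B = ∅ := by
    rw [eq_empty_iff_forall_notMem]
    rintro p ⟨hpU, hpB⟩
    rcases hpB with ⟨-, hpnU⟩ | ⟨-, hpb⟩
    · exact hpnU hpU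
    · have hpC' := hUC' hpU
      have : p.1 = b := le_antisymm hpb hpC'.2.1
      have : p ∈ U ∩ F := ⟨hpU, hpC', this⟩
      rw [hUF] at this
      exact this
  have := (isPreconnected_closed_iff.mp hCconn) A B hUcl hBcl hcover2 hAne hBne
  obtain ⟨p, -, hpAB⟩ := this
  rw [eq_empty_iff_forall_notMem] at hAB
  exact hAB p hpAB

theorem stmt6 (Γ : Set Strip) (hclosed : IsClosed Γ) (hconn : IsConnected Γ)
    (hunb : ∀ M : ℝ, ∃ p ∈ Γ, p.1 < M)
    (a : ℝ) (hmeet : (Γ ∩ V a).Nonempty) :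
    ∃ z ∈ Γ ∩ Vminus a,
      (∀ M : ℝ, ∃ p ∈ connectedComponentIn (Γ ∩ Vminus a) z, p.1 < M) ∧
      (connectedComponentIn (Γ ∩ Vminus a) z ∩ V a).Nonempty := by
  set gseq : ℕ → Set Strip := fun n => good Γ a (a - (n + 1)) with hgseq
  have hblt : ∀ n : ℕ, a - ((n : ℝ) + 1) < a := by
    intro n
    have : (0 : ℝ) ≤ (n : ℝ) := Nat.cast_nonneg n
    linarith
  have hgne : ∀ n, (gseq n).Nonempty := fun n =>
    good_nonempty hclosed hconn hunb hmeet (hblt n)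
  have hgcl : ∀ n, IsClosed (gseq n) := fun n => isClosed_good hclosed (hblt n).le
  have hgmono : ∀ n, gseq (n + 1) ⊆ gseq n := by
    intro n
    apply good_mono hclosed _ (hblt n)
    push_cast
    linarith
  have hgcomp : IsCompact (gseq 0) := by
    have hsub : gseq 0 ⊆ Kset Γ (a - ((0 : ℕ) + 1)) a := fun w hw =>
      good_mem_Kset (hblt 0).le hw.1 hw.2.1
    exact (isCompact_Kset hclosed _ a).of_isClosed_subset (hgcl 0) hsub
  obtain ⟨z, hz⟩ := IsCompact.nonempty_iInter_of_sequence_nonempty_isCompact_isClosed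
    gseq hgmono hgne hgcomp hgcl
  simp only [mem_iInter] at hz
  have hz0 := hz 0
  have hzΓ : z ∈ Γ := hz0.1
  have hza : z.1 = a := hz0.2.1
  have hzS : z ∈ Γ ∩ Vminus a := ⟨hzΓ, le_of_eq hza⟩
  refine ⟨z, hzS, ?_, ?_⟩
  · intro M
    obtain ⟨n, hn⟩ := exists_nat_gt (a - M)
    obtain ⟨p, hp1, hp2⟩ := (hz n).2.2
    have hsubK : Kset Γ (a - ((n : ℝ) + 1)) a ⊆ Γ ∩ Vminus a := by
      rintro q ⟨hq1, -, hq3⟩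
      exact ⟨hq1, hq3⟩
    refine ⟨p, connectedComponentIn_mono z hsubK hp1, ?_⟩
    have hp2' : p.1 = a - ((n : ℝ) + 1) := hp2
    linarith
  · exact ⟨z, mem_connectedComponentIn hzS, hza⟩
end

section
/- Let f̃ be a homeomorphism of the strip à = ℝ×[0,1] commuting with the unit horizontal translation, and let B⁻ = ⋂_{n≥0} f̃^{-n}((-∞,0]×[0,1]) ∩ { unbounded components }. If Γ is a connected component of B⁻ that is not injective under the covering projection (i.e., there exist z ∈ Γ and an integer s > 0 with z+(s,0) ∈ Γ) and f̃(Γ) ⊆ Γ, then there exists an integer k > 0 such that f̃^{-1}(Γ) ⊆ Γ + (k,0). -/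
open Set

theorem stmt8 (f : Strip ≃ₜ Strip)
    (hcomm : ∀ p, f (T p) = T (f p))
    (B : Set Strip) (hBclosed : IsClosed B)
    (hBleft : B ⊆ {p : Strip | p.1 ≤ 0})
    (hBinv : ⇑f '' B ⊆ B)
    (hBtr : TrZ (-1) '' B ⊆ B)
    (hBcomp : ∀ z ∈ B, ∀ M : ℝ, ∃ p ∈ connectedComponentIn B z, p.1 < M)
    (hBmax : ∀ C : Set Strip, IsClosed C → IsConnected C →
      (∀ M : ℝ, ∃ p ∈ C, p.1 < M) →
      (∀ n : ℕ, (⇑f)^[n] '' C ⊆ {p : Strip | p.1 ≤ 0}) → C ⊆ B)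
    (Γ : Set Strip) (z : Strip) (hz : z ∈ B) (hΓ : Γ = connectedComponentIn B z)
    (hnoninj : ∃ w ∈ Γ, ∃ s : ℤ, 0 < s ∧ TrZ s w ∈ Γ)
    (hΓinv : ⇑f '' Γ ⊆ Γ) :
    ∃ k : ℤ, 0 < k ∧ ⇑f.symm '' Γ ⊆ TrZ k '' Γ := by
  classical
  obtain ⟨w, hw, s, hs, hws⟩ := hnoninj
  -- Basic facts about TrZ
  have hTrZ_add : ∀ (a b : ℤ) (p : Strip), TrZ a (TrZ b p) = TrZ (a + b) p := by
    intro a b p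
    simp only [TrZ, Prod.mk.injEq]
    constructor
    · push_cast; ring
    · trivial
  have hTrZ_zero : ∀ p : Strip, TrZ 0 p = p := by
    intro p; simp [TrZ]
  have hTrZ_cont : ∀ a : ℤ, Continuous (TrZ a) := by
    intro a
    exact (continuous_fst.add continuous_const).prodMk continuous_snd
  have hT_eq : ∀ p : Strip, T p = TrZ 1 p := by
    intro p; simp [T, TrZ]
  have hTrZ_eq : ∀ {a b : ℤ} (p : Strip), a = b → TrZ a p = TrZ b p := by
    intro a b p h; rw [h]
  -- f commutes with all integer translations
  have hf_TrZ : ∀ (m : ℤ) (p : Strip), f (TrZ m p) = TrZ m (f p) := by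
    intro m
    induction m using Int.induction_on with
    | zero => intro p; rw [hTrZ_zero, hTrZ_zero]
    | succ n ih =>
        intro p
        have h1 : TrZ ((n : ℤ) + 1) p = T (TrZ n p) := by
          rw [hT_eq, hTrZ_add]; exact hTrZ_eq p (by ring)
        rw [h1, hcomm, ih, hT_eq, hTrZ_add]
        exact hTrZ_eq _ (by ring)
    | pred n ih =>
        intro p
        have h1 : TrZ (-(n : ℤ)) p = T (TrZ (-(n : ℤ) - 1) p) := by
          rw [hT_eq, hTrZ_add]; exact hTrZ_eq p (by ring)
        have h2 : f (TrZ (-(n : ℤ)) p) = T (f (TrZ (-(n : ℤ) - 1) p)) := by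
          rw [h1, hcomm]
        have h3 : TrZ (-(n : ℤ)) (f p) = T (f (TrZ (-(n : ℤ) - 1) p)) := by
          rw [← ih p, h2]
        have hTinj : Function.Injective T := by
          intro a b hab
          have := congrArg (TrZ (-1)) hab
          rwa [hT_eq a, hT_eq b, hTrZ_add, hTrZ_add, neg_add_cancel, hTrZ_zero,
            hTrZ_zero] at this
        have h4 : TrZ (-(n : ℤ) - 1) (f p) = f (TrZ (-(n : ℤ) - 1) p) := by
          apply hTinj
          rw [← h3, hT_eq, hTrZ_add]
          exact hTrZ_eq _ (by ring)
        exact h4.symm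
  have hfsymm_TrZ : ∀ (m : ℤ) (p : Strip), f.symm (TrZ m p) = TrZ m (f.symm p) := by
    intro m p
    have : f (TrZ m (f.symm p)) = TrZ m p := by
      rw [hf_TrZ, f.apply_symm_apply]
    calc f.symm (TrZ m p) = f.symm (f (TrZ m (f.symm p))) := by rw [this]
    _ = TrZ m (f.symm p) := f.symm_apply_apply _
  -- TrZ image as preimage
  have hTrZ_img : ∀ (a : ℤ) (S : Set Strip), TrZ a '' S = TrZ (-a) ⁻¹' S := by
    intro a S
    ext q
    constructor
    · rintro ⟨p, hp, rfl⟩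
      simpa [mem_preimage, hTrZ_add, hTrZ_zero] using hp
    · intro hq
      exact ⟨TrZ (-a) q, hq, by rw [hTrZ_add, add_neg_cancel, hTrZ_zero]⟩
  -- B is invariant under negative integer translations
  have hBtrN : ∀ n : ℕ, TrZ (-(n : ℤ)) '' B ⊆ B := by
    intro n
    induction n with
    | zero =>
        intro q hq; obtain ⟨p, hp, rfl⟩ := hq
        simp only [Nat.cast_zero, neg_zero]
        rwa [hTrZ_zero]
    | succ n ih =>
        intro q hq
        obtain ⟨p, hp, rfl⟩ := hq
        have heq1 : TrZ (-((n : ℤ) + 1)) p = TrZ (-1) (TrZ (-(n : ℤ)) p) := by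
          rw [hTrZ_add]; exact hTrZ_eq p (by ring)
        rw [Nat.cast_succ, heq1]
        exact hBtr ⟨_, ih ⟨p, hp, rfl⟩, rfl⟩
  have hBtrZ : ∀ m : ℤ, m ≤ 0 → TrZ m '' B ⊆ B := by
    intro m hm
    obtain ⟨n, rfl⟩ : ∃ n : ℕ, m = -(n : ℤ) := ⟨m.natAbs, by omega⟩
    exact hBtrN n
  -- Γ ⊆ B and Γ is the component of each of its points
  have hΓsubB : Γ ⊆ B := hΓ ▸ connectedComponentIn_subset B z
  have hcomp_eq : ∀ x ∈ Γ, connectedComponentIn B x = Γ := by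
    intro x hx
    rw [hΓ] at hx ⊢
    exact (connectedComponentIn_eq hx).symm
  -- mapping components
  have hcomp_map : ∀ g : Strip → Strip, Continuous g → g '' B ⊆ B → ∀ x ∈ B,
      g '' connectedComponentIn B x ⊆ connectedComponentIn B (g x) := by
    intro g hg hgB x hx
    exact (hg.image_connectedComponentIn_subset hx).trans
      (connectedComponentIn_mono _ hgB)
  -- TrZ (-s) maps Γ into Γ
  have hsΓ : TrZ (-s) '' Γ ⊆ Γ := by
    have hwB : TrZ s w ∈ B := hΓsubB hws
    have h1 : TrZ (-s) '' connectedComponentIn B (TrZ s w)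
        ⊆ connectedComponentIn B (TrZ (-s) (TrZ s w)) :=
      hcomp_map (TrZ (-s)) (hTrZ_cont _) (hBtrZ (-s) (by omega)) _ hwB
    rw [hTrZ_add, neg_add_cancel, hTrZ_zero] at h1
    rw [hcomp_eq _ hws, hcomp_eq _ hw] at h1
    exact h1
  -- multiples
  have hmultΓ : ∀ m : ℕ, TrZ (-(s * (m : ℤ))) '' Γ ⊆ Γ := by
    intro m
    induction m with
    | zero =>
        intro q hq; obtain ⟨p, hp, rfl⟩ := hq
        simpa [hTrZ_zero] using hp
    | succ m ih =>
        intro q hq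
        obtain ⟨p, hp, rfl⟩ := hq
        have heq1 : TrZ (-(s * ((m : ℤ) + 1))) p = TrZ (-s) (TrZ (-(s * (m : ℤ))) p) := by
          rw [hTrZ_add]; exact hTrZ_eq p (by ring)
        rw [Nat.cast_succ, heq1]
        exact hsΓ ⟨_, ih ⟨p, hp, rfl⟩, rfl⟩
  -- bound for f.symm of the left half-strip
  have hKc : IsCompact ((Icc (-1:ℝ) 0) ×ˢ (univ : Set (Icc (0:ℝ) 1))) :=
    isCompact_Icc.prod isCompact_univ
  have hKc' : IsCompact ((fun p : Strip => p.1) ''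
      (⇑f.symm '' ((Icc (-1:ℝ) 0) ×ˢ (univ : Set (Icc (0:ℝ) 1))))) :=
    (hKc.image f.symm.continuous).image continuous_fst
  obtain ⟨M, hM⟩ := hKc'.bddAbove
  have hbound : ∀ q : Strip, (f q).1 ≤ 0 → q.1 ≤ M := by
    intro q hq
    set x : ℝ := -(f q).1 with hx
    have hx0 : 0 ≤ x := by simpa [hx] using hq
    set n : ℤ := ⌊x⌋ with hn
    have hn0 : 0 ≤ n := Int.floor_nonneg.mpr hx0
    have h1 : (f q).1 + (n : ℝ) ∈ Icc (-1:ℝ) 0 := by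
      constructor
      · have := Int.sub_one_lt_floor x
        have hxn : x - 1 < (n : ℝ) := by exact_mod_cast this
        simp only [hx] at hxn; linarith
      · have := Int.floor_le x
        have hxn : (n : ℝ) ≤ x := this
        simp only [hx] at hxn; linarith
    have hmem : TrZ n (f q) ∈ (Icc (-1:ℝ) 0) ×ˢ (univ : Set (Icc (0:ℝ) 1)) := by
      constructor
      · exact h1
      · trivial
    have h2 : TrZ n q ∈ ⇑f.symm '' ((Icc (-1:ℝ) 0) ×ˢ (univ : Set (Icc (0:ℝ) 1))) := by
      refine ⟨TrZ n (f q), hmem, ?_⟩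
      rw [hfsymm_TrZ, f.symm_apply_apply]
    have h3 : (TrZ n q).1 ≤ M := hM ⟨TrZ n q, h2, rfl⟩
    have h4 : (TrZ n q).1 = q.1 + (n : ℝ) := rfl
    rw [h4] at h3
    have : (0:ℝ) ≤ (n : ℝ) := by exact_mod_cast hn0
    linarith
  have hΓright : ∀ p ∈ ⇑f.symm '' Γ, p.1 ≤ M := by
    rintro p ⟨q, hq, rfl⟩
    apply hbound
    rw [f.apply_symm_apply]
    exact hBleft (hΓsubB hq)
  -- choose k
  set m : ℕ := (⌈M⌉.toNat + 1) with hm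
  set k : ℤ := s * (m : ℤ) with hk
  have hmpos : (1 : ℤ) ≤ (m : ℤ) := by rw [hm]; push_cast; omega
  have hkpos : 0 < k := by
    have : (1:ℤ) ≤ s := hs
    nlinarith
  have hkM : M ≤ (k : ℝ) := by
    have h1 : (⌈M⌉ : ℤ) ≤ (m : ℤ) := by
      have := Int.self_le_toNat ⌈M⌉
      omega
    have h2 : (m : ℤ) ≤ k := by nlinarith [hs]
    have : M ≤ (⌈M⌉ : ℝ) := Int.le_ceil M
    have h3 : ((⌈M⌉ : ℤ) : ℝ) ≤ (k : ℝ) := by exact_mod_cast le_trans h1 h2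
    linarith
  have hk0 : (0:ℝ) ≤ (k : ℝ) := by exact_mod_cast hkpos.le
  -- the candidate set
  set C : Set Strip := TrZ (-k) '' (⇑f.symm '' Γ) with hC
  -- Γ is closed and connected
  have hΓconn : IsConnected Γ := hΓ ▸ isConnected_connectedComponentIn_iff.mpr hz
  have hΓclosed : IsClosed Γ := by
    rw [hΓ, connectedComponentIn_eq_image hz]
    exact hBclosed.isClosedEmbedding_subtypeVal.isClosedMap _ isClosed_connectedComponent
  have hCclosed : IsClosed C := by
    rw [hC, hTrZ_img, neg_neg]
    exact (f.symm.isClosedMap _ hΓclosed).preimage (hTrZ_cont k)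
  have hCconn : IsConnected C :=
    (hΓconn.image _ f.symm.continuous.continuousOn).image _ (hTrZ_cont (-k)).continuousOn
  -- Γ ⊆ f.symm '' Γ
  have hΓsub : Γ ⊆ ⇑f.symm '' Γ := by
    intro p hp
    exact ⟨f p, hΓinv ⟨p, hp, rfl⟩, f.symm_apply_apply p⟩
  have hCunbdd : ∀ M' : ℝ, ∃ p ∈ C, p.1 < M' := by
    intro M'
    obtain ⟨p, hp, hpM⟩ := hBcomp z hz (M' + (k : ℝ))
    rw [← hΓ] at hp
    refine ⟨TrZ (-k) p, ⟨p, hΓsub hp, rfl⟩, ?_⟩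
    have : (TrZ (-k) p).1 = p.1 + ((-k : ℤ) : ℝ) := rfl
    rw [this]
    push_cast
    linarith
  -- forward iterates
  have hΓiter : ∀ n : ℕ, (⇑f)^[n] '' Γ ⊆ Γ := by
    intro n
    induction n with
    | zero => simp
    | succ n ih =>
        rw [Function.iterate_succ', image_comp]
        exact (image_mono ih).trans hΓinv
  have hf_iter_TrZ : ∀ (n : ℕ) (a : ℤ) (p : Strip),
      (⇑f)^[n] (TrZ a p) = TrZ a ((⇑f)^[n] p) := by
    intro n a
    induction n with
    | zero => intro p; simp
    | succ n ih =>
        intro p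
        rw [Function.iterate_succ_apply', Function.iterate_succ_apply', ih, hf_TrZ]
  have hCiter : ∀ n : ℕ, (⇑f)^[n] '' C ⊆ {p : Strip | p.1 ≤ 0} := by
    intro n
    rcases n with _ | n
    · -- C itself
      simp only [Function.iterate_zero, image_id]
      rintro q ⟨p, hp, rfl⟩
      have h1 : p.1 ≤ M := hΓright p hp
      have : (TrZ (-k) p).1 = p.1 + ((-k : ℤ) : ℝ) := rfl
      simp only [mem_setOf_eq, this]
      push_cast
      linarith
    · rintro q ⟨c, hc, rfl⟩
      obtain ⟨p, hp, rfl⟩ := hc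
      obtain ⟨γ, hγ, rfl⟩ := hp
      rw [Function.iterate_succ_apply, hf_TrZ, f.apply_symm_apply, hf_iter_TrZ]
      have hγ' : (⇑f)^[n] γ ∈ Γ := hΓiter n ⟨γ, hγ, rfl⟩
      have h1 : ((⇑f)^[n] γ).1 ≤ 0 := hBleft (hΓsubB hγ')
      have : (TrZ (-k) ((⇑f)^[n] γ)).1 = ((⇑f)^[n] γ).1 + ((-k : ℤ) : ℝ) := rfl
      simp only [mem_setOf_eq, this]
      push_cast
      linarith
  -- C ⊆ B
  have hCB : C ⊆ B := hBmax C hCclosed hCconn hCunbdd hCiter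
  -- TrZ (-k) z ∈ C ∩ Γ
  have hzC : TrZ (-k) z ∈ C := ⟨z, hΓsub (hΓ ▸ mem_connectedComponentIn hz), rfl⟩
  have hzΓ : TrZ (-k) z ∈ Γ := by
    apply hmultΓ m
    exact ⟨z, hΓ ▸ mem_connectedComponentIn hz, by rw [hk]⟩
  -- C ⊆ Γ
  have hCΓ : C ⊆ Γ := by
    have h1 : C ⊆ connectedComponentIn B (TrZ (-k) z) :=
      hCconn.isPreconnected.subset_connectedComponentIn hzC hCB
    rwa [hcomp_eq _ hzΓ] at h1
  -- conclude
  refine ⟨k, hkpos, ?_⟩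
  have heq : TrZ k '' C = ⇑f.symm '' Γ := by
    rw [hC, ← image_comp]
    have : (TrZ k ∘ TrZ (-k)) = id := by
      funext p
      simp only [Function.comp_apply, id_eq, hTrZ_add]
      rw [show k + -k = 0 by ring, hTrZ_zero]
    rw [this, image_id]
  rw [← heq]
  exact image_mono hCΓ
end

section
/- Let f̃ be a homeomorphism of à = ℝ×[0,1] and B⁻ a closed subset of (-∞,0]×[0,1] with f̃(B⁻) ⊆ B⁻. If the ω-limit set ω(B⁻) = ⋂_{n≥0} closure(⋃_{i≥n} f̃^i(B⁻)) is empty, and every closed connected subset of (-∞,0]×[0,1] that is unbounded to the left and has all forward iterates in (-∞,0]×[0,1] is contained in B⁻, and every connected component of B⁻ is unbounded to the left, then there exists an integer N₁ > 0 such that f̃^{N₁}(B⁻) ⊆ B⁻ - (1,0). -/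
open Set

/-- `T` as a homeomorphism of the strip. -/
def Thom : Strip ≃ₜ Strip :=
  (Homeomorph.addRight (1:ℝ)).prodCongr (Homeomorph.refl _)

lemma Thom_coe : ⇑Thom = T := rfl

theorem stmt10 (f : Strip ≃ₜ Strip)
    (hcomm : ∀ p, f (T p) = T (f p))
    (B : Set Strip) (hBclosed : IsClosed B)
    (hBleft : B ⊆ {p : Strip | p.1 ≤ 0})
    (hBinv : ⇑f '' B ⊆ B)
    (homega : (⋂ n : ℕ, closure (⋃ i : ℕ, ⋃ _ : n ≤ i, (⇑f)^[i] '' B)) = ∅)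
    (hBmax : ∀ C : Set Strip, IsClosed C → IsConnected C →
      (∀ M : ℝ, ∃ p ∈ C, p.1 < M) →
      C ⊆ {p : Strip | p.1 ≤ 0} →
      (∀ n : ℕ, (⇑f)^[n] '' C ⊆ {p : Strip | p.1 ≤ 0}) → C ⊆ B)
    (hBcomp : ∀ z ∈ B, ∀ M : ℝ, ∃ p ∈ connectedComponentIn B z, p.1 < M) :
    ∃ N₁ : ℕ, 0 < N₁ ∧ (⇑f)^[N₁] '' B ⊆ TrZ (-1) '' B := by
  -- iterates stay in B
  have hiter : ∀ k : ℕ, (⇑f)^[k] '' B ⊆ B := by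
    intro k
    induction k with
    | zero => simp
    | succ n ih =>
      rw [Function.iterate_succ, Set.image_comp]
      exact (Set.image_mono hBinv).trans ih
  -- antitone
  have hmono : ∀ m n : ℕ, m ≤ n → (⇑f)^[n] '' B ⊆ (⇑f)^[m] '' B := by
    intro m n hmn
    obtain ⟨k, rfl⟩ := Nat.exists_eq_add_of_le hmn
    rw [Function.iterate_add, Set.image_comp]
    exact Set.image_mono (hiter k)
  -- closedness of iterate images
  have hclosediter : ∀ (S : Set Strip), IsClosed S → ∀ n : ℕ,
      IsClosed ((⇑f)^[n] '' S) := by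
    intro S hS n
    induction n with
    | zero => simpa using hS
    | succ n ih =>
      rw [Function.iterate_succ', Set.image_comp]
      exact f.isClosedMap _ ih
  -- the intersection of iterates is empty
  have hIempty : (⋂ n : ℕ, (⇑f)^[n] '' B) = ∅ := by
    rw [← Set.subset_empty_iff, ← homega]
    refine Set.iInter_mono fun n => ?_
    exact (Set.subset_iUnion₂ (s := fun i (_ : n ≤ i) => (⇑f)^[i] '' B) n le_rfl).trans
      subset_closure
  -- compact box
  set K : Set Strip := {p : Strip | p.1 ∈ Set.Icc (-1:ℝ) 0} with hK
  have hKcomp : IsCompact K := by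
    have : K = (Set.Icc (-1:ℝ) 0) ×ˢ (Set.univ : Set (Set.Icc (0:ℝ) 1)) := by
      ext p; simp [hK, Set.mem_prod]
    rw [this]
    exact isCompact_Icc.prod isCompact_univ
  -- find N with f^[N] '' B disjoint from K
  have hdir : Directed (· ⊇ ·) (fun n : ℕ => (⇑f)^[n] '' B) := by
    intro m n
    exact ⟨max m n, hmono m _ (le_max_left m n), hmono n _ (le_max_right m n)⟩
  obtain ⟨N, hN⟩ : ∃ N : ℕ, K ∩ (⇑f)^[N] '' B = ∅ := by
    refine hKcomp.elim_directed_family_closed _ (fun n => hclosediter B hBclosed n) ?_ hdir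
    rw [hIempty, Set.inter_empty]
  refine ⟨N + 1, Nat.succ_pos N, ?_⟩
  -- every point of f^[N+1] '' B has first coordinate < -1
  have hfar : ∀ n : ℕ, N + 1 ≤ n → ∀ q ∈ (⇑f)^[n] '' B, q.1 < -1 := by
    intro n hn q hq
    have hq' : q ∈ (⇑f)^[N] '' B := hmono N n (le_of_lt hn) hq
    have hq0 : q.1 ≤ 0 := hBleft (hiter n hq)
    by_contra h
    push_neg at h
    have : q ∈ K ∩ (⇑f)^[N] '' B := ⟨⟨h, hq0⟩, hq'⟩
    rw [hN] at this
    exact this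
  -- commuting of T with iterates of f
  have hcommN : ∀ n : ℕ, ∀ p : Strip, (⇑f)^[n] (T p) = T ((⇑f)^[n] p) := by
    intro n
    induction n with
    | zero => intro p; simp
    | succ n ih =>
      intro p
      rw [Function.iterate_succ_apply', Function.iterate_succ_apply', ih p, hcomm]
  -- main inclusion
  rintro q ⟨z, hz, rfl⟩
  set C := connectedComponentIn B z with hCdef
  have hzC : z ∈ C := mem_connectedComponentIn hz
  have hCB : C ⊆ B := connectedComponentIn_subset B z
  have hCclosed : IsClosed C := by
    rw [hCdef, connectedComponentIn_eq_image hz]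
    exact hBclosed.isClosedEmbedding_subtypeVal.isClosedMap _ isClosed_connectedComponent
  have hCconn : IsConnected C := isConnected_connectedComponentIn_iff.mpr hz
  set S := (⇑f)^[N+1] '' C with hSdef
  have hSB : S ⊆ (⇑f)^[N+1] '' B := Set.image_mono hCB
  have hSclosed : IsClosed S := hclosediter C hCclosed (N+1)
  have hSconn : IsConnected S := hCconn.image _ (f.continuous.iterate (N+1)).continuousOn
  have hSfar : ∀ p ∈ S, p.1 < -1 := fun p hp => hfar (N+1) le_rfl p (hSB hp)
  -- S is unbounded to the left
  have hSunb : ∀ M : ℝ, ∃ p ∈ S, p.1 < M := by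
    intro M
    by_contra h
    push_neg at h
    -- then S is compact, hence C is compact, contradicting unboundedness of C
    have hSsub : S ⊆ (Set.Icc M 0) ×ˢ (Set.univ : Set (Set.Icc (0:ℝ) 1)) := by
      intro p hp
      exact ⟨⟨h p hp, hBleft (hiter (N+1) (hSB hp))⟩, trivial⟩
    have hScomp : IsCompact S :=
      (isCompact_Icc.prod isCompact_univ).of_isClosed_subset hSclosed hSsub
    have hCeq : C = (⇑f.symm)^[N+1] '' S := by
      rw [hSdef, ← Set.image_comp]
      have : (⇑f.symm)^[N+1] ∘ (⇑f)^[N+1] = id := by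
        funext x
        exact Function.LeftInverse.iterate f.symm_apply_apply (N+1) x
      rw [this, Set.image_id]
    have hCcomp : IsCompact C := by
      rw [hCeq]
      exact hScomp.image (f.symm.continuous.iterate (N+1))
    have hfstcomp : IsCompact (Prod.fst '' C) := hCcomp.image continuous_fst
    obtain ⟨m, hm⟩ : BddBelow (Prod.fst '' C) := hfstcomp.bddBelow
    obtain ⟨p, hpC, hpm⟩ := hBcomp z hz m
    exact absurd (hm (Set.mem_image_of_mem _ hpC)) (not_le.mpr hpm)
  -- the translated set
  set D := T '' S with hDdef
  have hDclosed : IsClosed D := by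
    rw [hDdef, ← Thom_coe]
    exact Thom.isClosedMap S hSclosed
  have hDconn : IsConnected D := by
    rw [hDdef, ← Thom_coe]
    exact hSconn.image _ Thom.continuous.continuousOn
  have hDunb : ∀ M : ℝ, ∃ p ∈ D, p.1 < M := by
    intro M
    obtain ⟨p, hp, hplt⟩ := hSunb (M - 1)
    exact ⟨T p, Set.mem_image_of_mem _ hp, by simpa [T] using by linarith⟩
  have hDle : D ⊆ {p : Strip | p.1 ≤ 0} := by
    rintro _ ⟨p, hp, rfl⟩
    have := hSfar p hp
    simp only [T, Set.mem_setOf_eq]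
    linarith
  have hDiter : ∀ n : ℕ, (⇑f)^[n] '' D ⊆ {p : Strip | p.1 ≤ 0} := by
    intro n
    rintro _ ⟨_, ⟨p, hp, rfl⟩, rfl⟩
    rw [hcommN n p]
    have hfp : (⇑f)^[n] p ∈ (⇑f)^[N+1] '' B := by
      have : (⇑f)^[n] p ∈ (⇑f)^[n + (N+1)] '' B := by
        rw [Function.iterate_add, Set.image_comp]
        exact Set.mem_image_of_mem _ (hSB hp)
      exact hmono (N+1) (n + (N+1)) (Nat.le_add_left _ _) this
    have := hfar (N+1) le_rfl _ hfp
    simp only [T, Set.mem_setOf_eq]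
    linarith
  have hDB : D ⊆ B := hBmax D hDclosed hDconn hDunb hDle hDiter
  -- conclude
  have hq : (⇑f)^[N+1] z ∈ S := Set.mem_image_of_mem _ hzC
  have hTq : T ((⇑f)^[N+1] z) ∈ B := hDB (Set.mem_image_of_mem _ hq)
  refine ⟨T ((⇑f)^[N+1] z), hTq, ?_⟩
  show ((((⇑f)^[N+1] z).1 + 1) + ((-1 : ℤ) : ℝ), ((⇑f)^[N+1] z).2) = (⇑f)^[N+1] z
  push_cast
  ext <;> simp
end
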